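/- arXiv:0712.3867 — 11 statements merged into one kernel-verified Lean document; each statement's English description precedes it below -/
import Mathlib

section
/- Let P be a probability distribution on [N] whose probabilities are sorted in nonincreasing order, i.e., p_1 ≥ p_2 ≥ ⋯ ≥ p_N. Then D(P‖U_N) = max_{i ∈ [N]} P([i])·log₂(N·P([i])/i), where P([i]) = p_1 + ⋯ + p_i. -/
/-- Observational divergence of `P` w.r.t. `Q`, both viewed as distributions on
`[N] = {1,…,N}`: the maximum over events `E ⊆ [N]` of `P(E)·log₂(P(E)/Q(E))`
(the empty event contributes `0`). -/
noncomputable def obsDiv (N : ℕ) (P Q : ℕ → ℝ) : ℝ :=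
  ((Finset.Icc 1 N).powerset).sup' ⟨∅, Finset.empty_mem_powerset _⟩
    fun E => (∑ i ∈ E, P i) * Real.logb 2 ((∑ i ∈ E, P i) / (∑ i ∈ E, Q i))

/-- Relative entropy `S(P‖Q) = Σ_{i=1}^N p_i log₂(p_i/q_i)` (with `0·log 0 = 0`). -/
noncomputable def relEnt (N : ℕ) (P Q : ℕ → ℝ) : ℝ :=
  ∑ i ∈ Finset.Icc 1 N, P i * Real.logb 2 (P i / Q i)

/-- The uniform distribution on `[N]`. -/
noncomputable def unif (N : ℕ) : ℕ → ℝ := fun _ => (N : ℝ)⁻¹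

/-- `P` is a probability distribution on `[N] = {1,…,N}`. -/
def IsProbOn (N : ℕ) (P : ℕ → ℝ) : Prop :=
  (∀ i ∈ Finset.Icc 1 N, 0 ≤ P i) ∧ ∑ i ∈ Finset.Icc 1 N, P i = 1

lemma prefix_max (N : ℕ) (P : ℕ → ℝ)
    (hsorted : ∀ i j, 1 ≤ i → i ≤ j → j ≤ N → P j ≤ P i)
    (E : Finset ℕ) (hE : E ⊆ Finset.Icc 1 N) :
    ∑ i ∈ E, P i ≤ ∑ j ∈ Finset.Icc 1 E.card, P j := by
  induction E using Finset.strongInduction with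
  | _ E ih =>
    rcases E.eq_empty_or_nonempty with rfl | hne
    · simp
    · set m := E.max' hne with hmdef
      have hm : m ∈ E := E.max'_mem hne
      have hmN : m ≤ N := (Finset.mem_Icc.mp (hE hm)).2
      have hsub : E ⊆ Finset.Icc 1 m := fun x hx =>
        Finset.mem_Icc.mpr ⟨(Finset.mem_Icc.mp (hE hx)).1, E.le_max' x hx⟩
      have hcard : E.card ≤ m := by
        have := Finset.card_le_card hsub
        simpa using this
      have hcard1 : 1 ≤ E.card := Finset.card_pos.mpr hne
      have hsplit : ∑ i ∈ E, P i = P m + ∑ i ∈ E.erase m, P i :=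
        (Finset.add_sum_erase E P hm).symm
      have hih := ih (E.erase m) (Finset.erase_ssubset hm)
        (fun x hx => hE (Finset.mem_of_mem_erase hx))
      rw [Finset.card_erase_of_mem hm] at hih
      have hPm : P m ≤ P E.card := hsorted E.card m hcard1 hcard hmN
      have hk : E.card = (E.card - 1) + 1 := (Nat.succ_pred_eq_of_pos hcard1).symm
      have hsum : ∑ j ∈ Finset.Icc 1 E.card, P j
          = ∑ j ∈ Finset.Icc 1 (E.card - 1), P j + P E.card := by
        rw [hk, Finset.sum_Icc_succ_top (by omega)]
        rw [← hk]
      rw [hsplit, hsum]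
      linarith

lemma mono_xlog (c x y : ℝ) (hc : 0 < c) (hx : c ≤ x) (hxy : x ≤ y) :
    x * Real.logb 2 (x / c) ≤ y * Real.logb 2 (y / c) := by
  have hx0 : 0 < x := lt_of_lt_of_le hc hx
  have h1 : (1:ℝ) ≤ x / c := (one_le_div hc).mpr hx
  have hlog1 : 0 ≤ Real.logb 2 (x/c) := Real.logb_nonneg one_lt_two h1
  have hlog2 : Real.logb 2 (x/c) ≤ Real.logb 2 (y/c) :=
    Real.logb_le_logb_of_le one_lt_two (div_pos hx0 hc) (by gcongr)
  calc x * Real.logb 2 (x/c) ≤ y * Real.logb 2 (x/c) :=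
        mul_le_mul_of_nonneg_right hxy hlog1
    _ ≤ y * Real.logb 2 (y/c) :=
        mul_le_mul_of_nonneg_left hlog2 (le_trans (le_of_lt hx0) hxy)

/-- For a probability distribution `P` on `[N]` sorted in nonincreasing order,
`D(P‖U_N) = max_{i ∈ [N]} P([i])·log₂(N·P([i])/i)`. -/
theorem stmt1 (N : ℕ) (hN : 1 ≤ N) (P : ℕ → ℝ) (hP : IsProbOn N P)
    (hsorted : ∀ i j, 1 ≤ i → i ≤ j → j ≤ N → P j ≤ P i) :
    obsDiv N P (unif N) =
      (Finset.Icc 1 N).sup' (Finset.nonempty_Icc.mpr hN)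
        (fun i => (∑ j ∈ Finset.Icc 1 i, P j) *
          Real.logb 2 ((N : ℝ) * (∑ j ∈ Finset.Icc 1 i, P j) / (i : ℝ))) := by
  have hN0 : (0:ℝ) < N := by exact_mod_cast hN
  obtain ⟨hPnn, hPsum⟩ := hP
  -- sum of unif over any finset
  have hunif : ∀ E : Finset ℕ, ∑ i ∈ E, unif N i = (E.card : ℝ) / N := by
    intro E
    simp [unif, Finset.sum_const, nsmul_eq_mul, div_eq_mul_inv]
  -- the N-th prefix term equals 0
  have hNterm : (∑ j ∈ Finset.Icc 1 N, P j) *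
      Real.logb 2 ((N : ℝ) * (∑ j ∈ Finset.Icc 1 N, P j) / (N : ℝ)) = 0 := by
    rw [hPsum]
    simp [div_self (ne_of_gt hN0)]
  have hNmem : N ∈ Finset.Icc 1 N := Finset.mem_Icc.mpr ⟨hN, le_refl N⟩
  apply le_antisymm
  · -- sup over events ≤ sup over prefixes
    apply Finset.sup'_le
    intro E hE
    have hEsub : E ⊆ Finset.Icc 1 N := Finset.mem_powerset.mp hE
    rw [hunif E]
    set k := E.card with hk
    set S := ∑ i ∈ E, P i with hS
    have hSnn : 0 ≤ S := Finset.sum_nonneg fun i hi => hPnn i (hEsub hi)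
    by_cases hcase : S ≤ (k : ℝ) / N
    · -- value is ≤ 0, bounded by the N-th prefix term
      have hv : S * Real.logb 2 (S / ((k:ℝ)/N)) ≤ 0 := by
        rcases eq_or_lt_of_le hSnn with h0 | hSpos
        · rw [← h0]; ring_nf; simp
        · have hk0 : (0:ℝ) < (k:ℝ)/N := lt_of_lt_of_le hSpos hcase
          have : S / ((k:ℝ)/N) ≤ 1 := (div_le_one hk0).mpr hcase
          have hlog : Real.logb 2 (S / ((k:ℝ)/N)) ≤ 0 :=
            Real.logb_nonpos one_lt_two (by positivity) this
          exact mul_nonpos_of_nonneg_of_nonpos hSnn hlog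
      calc S * Real.logb 2 (S / ((k:ℝ)/N)) ≤ 0 := hv
        _ ≤ _ := by
            rw [← hNterm]
            exact Finset.le_sup' (fun i => (∑ j ∈ Finset.Icc 1 i, P j) *
              Real.logb 2 ((N : ℝ) * (∑ j ∈ Finset.Icc 1 i, P j) / (i : ℝ))) hNmem
    · push_neg at hcase
      have hk1 : 1 ≤ k := by
        by_contra h
        have : k = 0 := by omega
        rw [this] at hcase
        simp at hcase
        have : S = 0 := by
          rw [hS, hk] at *
          rw [Finset.card_eq_zero.mp ‹E.card = 0›]
          simp
        linarith
      have hkN : k ≤ N := by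
        have := Finset.card_le_card hEsub
        simpa using this
      have hkmem : k ∈ Finset.Icc 1 N := Finset.mem_Icc.mpr ⟨hk1, hkN⟩
      have hkpos : (0:ℝ) < (k:ℝ)/N := div_pos (by exact_mod_cast hk1) hN0
      set T := ∑ j ∈ Finset.Icc 1 k, P j with hT
      have hST : S ≤ T := prefix_max N P hsorted E hEsub
      have hmono : S * Real.logb 2 (S / ((k:ℝ)/N)) ≤ T * Real.logb 2 (T / ((k:ℝ)/N)) :=
        mono_xlog _ _ _ hkpos (le_of_lt hcase) hST
      have hrw : T / ((k:ℝ)/N) = (N:ℝ) * T / (k:ℝ) := by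
        rw [div_div_eq_mul_div]; ring
      calc S * Real.logb 2 (S / ((k:ℝ)/N)) ≤ T * Real.logb 2 (T / ((k:ℝ)/N)) := hmono
        _ = T * Real.logb 2 ((N:ℝ) * T / (k:ℝ)) := by rw [hrw]
        _ ≤ _ := Finset.le_sup' (fun i => (∑ j ∈ Finset.Icc 1 i, P j) *
              Real.logb 2 ((N : ℝ) * (∑ j ∈ Finset.Icc 1 i, P j) / (i : ℝ))) hkmem
  · -- each prefix is an event
    apply Finset.sup'_le
    intro i hi
    obtain ⟨hi1, hiN⟩ := Finset.mem_Icc.mp hi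
    have hmem : Finset.Icc 1 i ∈ (Finset.Icc 1 N).powerset :=
      Finset.mem_powerset.mpr (Finset.Icc_subset_Icc_right hiN)
    have heq : (∑ j ∈ Finset.Icc 1 i, P j) *
        Real.logb 2 ((N : ℝ) * (∑ j ∈ Finset.Icc 1 i, P j) / (i : ℝ))
        = (∑ j ∈ Finset.Icc 1 i, P j) *
          Real.logb 2 ((∑ j ∈ Finset.Icc 1 i, P j) / (∑ j ∈ Finset.Icc 1 i, unif N j)) := by
      rw [hunif]
      congr 2
      rw [Nat.card_Icc]
      simp
      rw [div_div_eq_mul_div]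
      ring
    rw [heq]
    exact Finset.le_sup' (fun E => (∑ i ∈ E, P i) *
      Real.logb 2 ((∑ i ∈ E, P i) / (∑ i ∈ E, unif N i))) hmem
end

section
/- Fix a positive integer N and a real number k > 0, and let h: (0,∞) → (0,∞) be defined by letting h(x) be the unique y > 0 with y·log₂(N·y/x) = k. Then h is concave on (0,∞): for all x₁, x₂ > 0 and t ∈ [0,1], h(t·x₁ + (1−t)·x₂) ≥ t·h(x₁) + (1−t)·h(x₂). -/
open Real

/-- Two-point log-sum inequality. -/
lemma logsum_aux (u₁ u₂ v₁ v₂ : ℝ) (hu₁ : 0 < u₁) (hu₂ : 0 < u₂)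
    (hv₁ : 0 < v₁) (hv₂ : 0 < v₂) :
    (u₁ + u₂) * Real.log ((u₁ + u₂) / (v₁ + v₂)) ≤
      u₁ * Real.log (u₁ / v₁) + u₂ * Real.log (u₂ / v₂) := by
  have hs : 0 < v₁ + v₂ := by linarith
  have hv₁' := hv₁.ne'
  have hv₂' := hv₂.ne'
  have hs' := hs.ne'
  have key := Real.convexOn_mul_log.2 (Set.mem_Ici.mpr (le_of_lt (div_pos hu₁ hv₁)))
    (Set.mem_Ici.mpr (le_of_lt (div_pos hu₂ hv₂)))
    (le_of_lt (div_pos hv₁ hs)) (le_of_lt (div_pos hv₂ hs))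
    (by field_simp)
  simp only [smul_eq_mul] at key
  have harg : v₁ / (v₁ + v₂) * (u₁ / v₁) + v₂ / (v₁ + v₂) * (u₂ / v₂)
      = (u₁ + u₂) / (v₁ + v₂) := by
    field_simp
  rw [harg] at key
  have key2 := mul_le_mul_of_nonneg_left key (le_of_lt hs)
  calc (u₁ + u₂) * Real.log ((u₁ + u₂) / (v₁ + v₂))
      = (v₁ + v₂) * ((u₁ + u₂) / (v₁ + v₂) * Real.log ((u₁ + u₂) / (v₁ + v₂))) := by
        field_simp
    _ ≤ (v₁ + v₂) * (v₁ / (v₁ + v₂) * (u₁ / v₁ * Real.log (u₁ / v₁)) +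
          v₂ / (v₁ + v₂) * (u₂ / v₂ * Real.log (u₂ / v₂))) := key2
    _ = u₁ * Real.log (u₁ / v₁) + u₂ * Real.log (u₂ / v₂) := by
        field_simp

set_option maxHeartbeats 1000000 in
/-- Let `h : (0,∞) → (0,∞)` be defined by `h(x)` being the unique `y > 0` with
`y·log₂(N·y/x) = k`. Then `h` is concave on `(0,∞)`. -/
theorem stmt4 (N : ℕ) (hN : 0 < N) (k : ℝ) (hk : 0 < k) (h : ℝ → ℝ)
    (hh : ∀ x, 0 < x → 0 < h x ∧ h x * Real.logb 2 ((N : ℝ) * h x / x) = k) :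
    ∀ x₁ x₂ t : ℝ, 0 < x₁ → 0 < x₂ → 0 ≤ t → t ≤ 1 →
      t * h x₁ + (1 - t) * h x₂ ≤ h (t * x₁ + (1 - t) * x₂) := by
  intro x₁ x₂ t hx₁ hx₂ ht0 ht1
  -- endpoint cases
  rcases eq_or_lt_of_le ht0 with rfl | ht0'
  · simp
  rcases eq_or_lt_of_le ht1 with rfl | ht1'
  · simp
  set x := t * x₁ + (1 - t) * x₂ with hxdef
  set y := t * h x₁ + (1 - t) * h x₂ with hydef
  have hNpos : (0:ℝ) < N := by exact_mod_cast hN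
  obtain ⟨hy₁, he₁⟩ := hh x₁ hx₁
  obtain ⟨hy₂, he₂⟩ := hh x₂ hx₂
  have hxpos : 0 < x := by
    have := mul_pos ht0' hx₁
    nlinarith
  obtain ⟨hhx, hex⟩ := hh x hxpos
  have hypos : 0 < y := by
    have := mul_pos ht0' hy₁
    nlinarith
  have h1t : 0 < 1 - t := by linarith
  have hlog2 : (0:ℝ) < Real.log 2 := Real.log_pos (by norm_num)
  -- Step A: convexity gives y * logb 2 (N*y/x) ≤ k
  have stepA : y * Real.logb 2 ((N:ℝ) * y / x) ≤ k := by
    have hls := logsum_aux (t * h x₁) ((1 - t) * h x₂) (t * x₁) ((1 - t) * x₂)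
      (mul_pos ht0' hy₁) (mul_pos h1t hy₂) (mul_pos ht0' hx₁) (mul_pos h1t hx₂)
    have e1 : (t * h x₁) / (t * x₁) = h x₁ / x₁ := by
      rw [mul_div_mul_left _ _ (ne_of_gt ht0')]
    have e2 : ((1 - t) * h x₂) / ((1 - t) * x₂) = h x₂ / x₂ := by
      rw [mul_div_mul_left _ _ (ne_of_gt h1t)]
    rw [e1, e2] at hls
    -- we now show y * log(N*y/x) ≤ t*(h x₁ * log(N*h x₁/x₁)) + ...
    have hlogN : ∀ a b : ℝ, 0 < a → 0 < b →
        Real.log ((N:ℝ) * a / b) = Real.log (N:ℝ) + Real.log (a / b) := by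
      intro a b ha hb
      rw [mul_div_assoc, Real.log_mul (ne_of_gt hNpos) (ne_of_gt (div_pos ha hb))]
    have key : y * Real.log ((N:ℝ) * y / x) ≤
        t * (h x₁ * Real.log ((N:ℝ) * h x₁ / x₁)) +
        (1 - t) * (h x₂ * Real.log ((N:ℝ) * h x₂ / x₂)) := by
      rw [hlogN y x hypos hxpos, hlogN (h x₁) x₁ hy₁ hx₁, hlogN (h x₂) x₂ hy₂ hx₂]
      have : y * Real.log (y / x) ≤ t * (h x₁ * Real.log (h x₁ / x₁)) +
          (1 - t) * (h x₂ * Real.log (h x₂ / x₂)) := by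
        calc y * Real.log (y / x) ≤ t * h x₁ * Real.log (h x₁ / x₁) +
              (1 - t) * h x₂ * Real.log (h x₂ / x₂) := hls
          _ = t * (h x₁ * Real.log (h x₁ / x₁)) +
              (1 - t) * (h x₂ * Real.log (h x₂ / x₂)) := by ring
      nlinarith [this]
    have hk1 : h x₁ * Real.logb 2 ((N:ℝ) * h x₁ / x₁) = k := he₁
    have hk2 : h x₂ * Real.logb 2 ((N:ℝ) * h x₂ / x₂) = k := he₂
    unfold Real.logb at hk1 hk2 ⊢
    rw [← mul_div_assoc, div_le_iff₀ hlog2]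
    rw [← mul_div_assoc, div_eq_iff (ne_of_gt hlog2)] at hk1 hk2
    calc y * Real.log ((N:ℝ) * y / x)
        ≤ t * (h x₁ * Real.log ((N:ℝ) * h x₁ / x₁)) +
          (1 - t) * (h x₂ * Real.log ((N:ℝ) * h x₂ / x₂)) := key
      _ = t * (k * Real.log 2) + (1 - t) * (k * Real.log 2) := by rw [hk1, hk2]
      _ = k * Real.log 2 := by ring
  -- Step B: conclude y ≤ h x
  by_contra hcon
  push_neg at hcon  -- h x < y
  have hlogpos : 0 < Real.logb 2 ((N:ℝ) * h x / x) := by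
    by_contra hnp
    push_neg at hnp
    nlinarith [mul_nonpos_of_nonneg_of_nonpos (le_of_lt hhx) hnp]
  have harg1 : 1 < (N:ℝ) * h x / x := by
    by_contra hle
    push_neg at hle
    have := Real.logb_nonpos one_lt_two (le_of_lt (div_pos (mul_pos hNpos hhx) hxpos)) hle
    linarith
  have hargmono : (N:ℝ) * h x / x < (N:ℝ) * y / x :=
    (div_lt_div_iff_of_pos_right hxpos).mpr (mul_lt_mul_of_pos_left hcon hNpos)
  have hlb : Real.logb 2 ((N:ℝ) * h x / x) < Real.logb 2 ((N:ℝ) * y / x) :=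
    Real.logb_lt_logb one_lt_two (div_pos (mul_pos hNpos hhx) hxpos) hargmono
  have : h x * Real.logb 2 ((N:ℝ) * h x / x) < y * Real.logb 2 ((N:ℝ) * y / x) :=
    mul_lt_mul hcon hlb.le hlogpos (le_of_lt (lt_trans hhx hcon))
  rw [hex] at this
  linarith [stepA]
end

section
/- Fix an integer N > 1 and a real k > 0, and let P = (p_1,…,p_N) be the constructed distribution. Then P is a probability distribution (all p_i ≥ 0 and Σ_{i=1}^N p_i = 1) and its probabilities are nonincreasing: p_1 ≥ p_2 ≥ ⋯ ≥ p_N. -/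
lemma psi_lt_psi {c a b : ℝ} (hc : 0 < c) (ha : 0 ≤ a) (hab : a < b) :
    a * Real.exp (-c / a) < b * Real.exp (-c / b) := by
  rcases eq_or_lt_of_le ha with h | h
  · rw [← h]
    have := Real.exp_pos (-c / b)
    nlinarith
  · have hb : 0 < b := lt_trans h hab
    have h1 : -c / a < -c / b := by
      rw [div_lt_div_iff₀ h hb]
      nlinarith
    calc a * Real.exp (-c / a) < b * Real.exp (-c / a) := by
          nlinarith [Real.exp_pos (-c / a)]
      _ ≤ b * Real.exp (-c / b) := by
          nlinarith [Real.exp_le_exp.2 h1.le, Real.exp_pos (-c/a)]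

lemma midpt {c a b : ℝ} (hc : 0 < c) (ha : 0 ≤ a) (hb : 0 < b) :
    (a + b) * Real.exp (-(2 * c) / (a + b)) ≤
      a * Real.exp (-c / a) + b * Real.exp (-c / b) := by
  rcases eq_or_lt_of_le ha with h | h
  · rw [← h]
    simp only [zero_add, zero_mul]
    have h1 : -(2 * c) / b ≤ -c / b := by
      rw [div_le_div_iff₀ hb hb]; nlinarith
    nlinarith [Real.exp_le_exp.2 h1, Real.exp_pos (-(2 * c) / b)]
  · have hab : 0 < a + b := by linarith
    have key := convexOn_exp.2 (Set.mem_univ (-c / a)) (Set.mem_univ (-c / b))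
      (le_of_lt (div_pos h hab)) (le_of_lt (div_pos hb hab)) (by field_simp)
    simp only [smul_eq_mul] at key
    have e1 : a / (a + b) * (-c / a) + b / (a + b) * (-c / b) = -(2 * c) / (a + b) := by
      field_simp; ring
    rw [e1] at key
    have h2 := mul_le_mul_of_nonneg_left key hab.le
    have e2 : (a + b) * (a / (a + b) * Real.exp (-c / a) + b / (a + b) * Real.exp (-c / b))
        = a * Real.exp (-c / a) + b * Real.exp (-c / b) := by
      field_simp
    linarith [e2 ▸ h2]

lemma telescope_sum (s : ℕ → ℝ) (n : ℕ) :
    ∑ i ∈ Finset.Icc 1 n, (s i - s (i - 1)) = s n - s 0 := by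
  induction n with
  | zero => simp
  | succ n ih =>
    rw [Finset.sum_Icc_succ_top (by omega : 1 ≤ n + 1), ih]
    simp

/-- The constructed vector `P = (p_1,…,p_N)` (with `v_i` the unique positive root of
`v·log₂(N·v/i) = k`, `s_0 = 0`, `s_i = min{1, v_i}`, `p_i = s_i − s_{i−1}`) is a
probability distribution on `[N]` with nonincreasing probabilities. -/
theorem stmt5 (N : ℕ) (hN : 1 < N) (k : ℝ) (hk : 0 < k)
    (v : ℕ → ℝ)
    (hv : ∀ i ∈ Finset.Icc 1 N,
      0 < v i ∧ v i * Real.logb 2 ((N : ℝ) * v i / (i : ℝ)) = k)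
    (s : ℕ → ℝ) (hs0 : s 0 = 0) (hs : ∀ i ∈ Finset.Icc 1 N, s i = min 1 (v i))
    (p : ℕ → ℝ) (hp : ∀ i ∈ Finset.Icc 1 N, p i = s i - s (i - 1)) :
    IsProbOn N p ∧ ∀ i ∈ Finset.Icc 1 (N - 1), p (i + 1) ≤ p i := by
  have hN1 : (1 : ℝ) < N := by exact_mod_cast hN
  have hNpos : (0 : ℝ) < N := by linarith
  set c := k * Real.log 2 with hcdef
  have hc : 0 < c := mul_pos hk (Real.log_pos one_lt_two)
  set V : ℕ → ℝ := fun i => if i = 0 then 0 else v i with hVdef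
  have hV0 : V 0 = 0 := by simp [hVdef]
  have hVv : ∀ i ∈ Finset.Icc 1 N, V i = v i := by
    intro i hi
    simp only [Finset.mem_Icc] at hi
    simp only [hVdef, if_neg (by omega : ¬ i = 0)]
  have hVpos : ∀ i, 1 ≤ i → i ≤ N → 0 < V i := by
    intro i h1 h2
    have hmem : i ∈ Finset.Icc 1 N := Finset.mem_Icc.2 ⟨h1, h2⟩
    rw [hVv i hmem]
    exact (hv i hmem).1
  have hVnn : ∀ i, i ≤ N → 0 ≤ V i := by
    intro i hi
    rcases Nat.eq_zero_or_pos i with h0 | h1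
    · subst h0; rw [hV0]
    · exact (hVpos i h1 hi).le
  have hVeq : ∀ i, i ≤ N → (i : ℝ) = (N : ℝ) * (V i * Real.exp (-c / V i)) := by
    intro i hiN
    rcases Nat.eq_zero_or_pos i with h0 | h1
    · subst h0; simp [hV0]
    · have hmem : i ∈ Finset.Icc 1 N := Finset.mem_Icc.2 ⟨h1, hiN⟩
      obtain ⟨hvp, hveq⟩ := hv i hmem
      rw [hVv i hmem]
      have hi0 : (0 : ℝ) < i := by exact_mod_cast h1
      have hx : (0 : ℝ) < (N : ℝ) * v i / i := by positivity
      have hlog2 : (0 : ℝ) < Real.log 2 := Real.log_pos one_lt_two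
      have h1' : Real.log ((N : ℝ) * v i / i) = c / v i := by
        rw [Real.logb] at hveq
        rw [eq_div_iff hvp.ne', hcdef]
        field_simp at hveq
        rw [mul_comm (v i) (N : ℝ)] at hveq
        linarith
      have h2 : (N : ℝ) * v i / i = Real.exp (c / v i) := by
        rw [← h1', Real.exp_log hx]
      have hep : (0 : ℝ) < Real.exp (c / v i) := Real.exp_pos _
      rw [neg_div, Real.exp_neg]
      rw [div_eq_iff hi0.ne'] at h2
      field_simp
      linarith
  have hVmono : ∀ i j, i ≤ N → j ≤ N → i < j → V i < V j := by
    intro i j hiN hjN hij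
    by_contra hle
    push_neg at hle
    have hji : 0 ≤ V j := hVnn j hjN
    have hij' : (i : ℝ) < j := by exact_mod_cast hij
    rcases eq_or_lt_of_le hle with he | hlt
    · have : (i : ℝ) = j := by rw [hVeq i hiN, hVeq j hjN, he]
      linarith
    · have h := psi_lt_psi hc hji hlt
      have : (j : ℝ) < i := by
        rw [hVeq i hiN, hVeq j hjN]; nlinarith
      linarith
  have hconc : ∀ i, 1 ≤ i → i + 1 ≤ N → V (i - 1) + V (i + 1) ≤ 2 * V i := by
    intro i h1 h2
    by_contra hlt
    push_neg at hlt
    set a := V (i - 1) with hadef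
    set b := V (i + 1) with hbdef
    set m := V i with hmdef
    have ha : 0 ≤ a := hVnn _ (by omega)
    have hb : 0 < b := hVpos _ (by omega) h2
    have hm : 0 < m := hVpos _ h1 (by omega)
    have hkey := midpt (c := c) hc ha hb
    have hEa : ((i - 1 : ℕ) : ℝ) = N * (a * Real.exp (-c / a)) := hVeq _ (by omega)
    have hEb : ((i + 1 : ℕ) : ℝ) = N * (b * Real.exp (-c / b)) := hVeq _ (by omega)
    have hEm : ((i : ℕ) : ℝ) = N * (m * Real.exp (-c / m)) := hVeq _ (by omega)
    have hcast : ((i - 1 : ℕ) : ℝ) + ((i + 1 : ℕ) : ℝ) = 2 * (i : ℝ) := by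
      have h3 : (i - 1) + (i + 1) = 2 * i := by omega
      exact_mod_cast h3
    have hmid : m < (a + b) / 2 := by linarith
    have hpsi := psi_lt_psi hc hm.le hmid
    have hrw : -(2 * c) / (a + b) = -c / ((a + b) / 2) := by
      rw [div_div_eq_mul_div]; ring
    rw [hrw] at hkey
    have hkey' : 2 * ((a + b) / 2 * Real.exp (-c / ((a + b) / 2)))
        ≤ a * Real.exp (-c / a) + b * Real.exp (-c / b) := by
      calc 2 * ((a + b) / 2 * Real.exp (-c / ((a + b) / 2)))
          = (a + b) * Real.exp (-c / ((a + b) / 2)) := by ring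
        _ ≤ _ := hkey
    have hsum : a * Real.exp (-c / a) + b * Real.exp (-c / b)
        = 2 * (m * Real.exp (-c / m)) := by
      have hN' : (N : ℝ) ≠ 0 := hNpos.ne'
      have h4 : (N : ℝ) * (a * Real.exp (-c / a)) + (N : ℝ) * (b * Real.exp (-c / b))
          = 2 * ((N : ℝ) * (m * Real.exp (-c / m))) := by
        rw [← hEa, ← hEb, ← hEm]; linarith
      apply mul_left_cancel₀ hN'
      linarith
    linarith
  have hS : ∀ i, i ≤ N → s i = min 1 (V i) := by
    intro i hiN
    rcases Nat.eq_zero_or_pos i with h0 | h1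
    · subst h0; rw [hs0, hV0]; simp
    · have hmem : i ∈ Finset.Icc 1 N := Finset.mem_Icc.2 ⟨h1, hiN⟩
      rw [hs i hmem, hVv i hmem]
  have hVN : 1 ≤ V N := by
    by_contra hlt
    push_neg at hlt
    have h := psi_lt_psi hc (hVnn N le_rfl) hlt
    have hE : (N : ℝ) = N * (V N * Real.exp (-c / V N)) := hVeq N le_rfl
    have he1 : Real.exp (-c / 1) < 1 := by
      rw [div_one, Real.exp_lt_one_iff]; linarith
    nlinarith
  refine ⟨⟨?_, ?_⟩, ?_⟩
  · intro i hi
    have hi' := Finset.mem_Icc.1 hi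
    rw [hp i hi, hS i hi'.2, hS (i - 1) (by omega)]
    have hle : V (i - 1) ≤ V i := (hVmono (i - 1) i (by omega) hi'.2 (by omega)).le
    have := min_le_min (le_refl (1 : ℝ)) hle
    linarith
  · rw [Finset.sum_congr rfl hp, telescope_sum s N, hs0, hS N le_rfl,
      min_eq_left hVN]
    ring
  · intro i hi
    have hi' := Finset.mem_Icc.1 hi
    have h1 : 1 ≤ i := hi'.1
    have h2 : i + 1 ≤ N := by omega
    rw [hp (i + 1) (Finset.mem_Icc.2 ⟨by omega, h2⟩),
      hp i (Finset.mem_Icc.2 ⟨h1, by omega⟩)]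
    have e1 : i + 1 - 1 = i := by omega
    rw [e1, hS (i + 1) h2, hS i (by omega), hS (i - 1) (by omega)]
    have hcc := hconc i h1 h2
    rcases le_or_gt 1 (V i) with hm | hm
    · rw [min_eq_left hm]
      have := min_le_left 1 (V (i + 1))
      have := min_le_left 1 (V (i - 1))
      linarith
    · rw [min_eq_right hm.le]
      have := min_le_right 1 (V (i + 1))
      have := min_le_right 1 (V (i - 1))
      linarith
end

section
/- Fix an integer N > 1 and a real k with 16/N ≤ k < log₂ N, and let P be the constructed distribution on [N]. Then the observational divergence of P with respect to the uniform distribution equals k, i.e., D(P‖U_N) = k. -/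
noncomputable def myphi (k v : ℝ) : ℝ := v * Real.exp (-(k * Real.log 2) / v)

lemma myphi_mono {k : ℝ} (hk : 0 < k) {a b : ℝ} (ha : 0 < a) (hab : a < b) :
    myphi k a < myphi k b := by
  unfold myphi
  have h2 : (0:ℝ) < Real.log 2 := Real.log_pos (by norm_num)
  have hκ : 0 < k * Real.log 2 := by positivity
  have hb : 0 < b := lt_trans ha hab
  have hexp : Real.exp (-(k * Real.log 2) / a) ≤ Real.exp (-(k * Real.log 2) / b) := by
    apply Real.exp_le_exp.mpr
    rw [neg_div, neg_div, neg_le_neg_iff]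
    exact div_le_div_of_nonneg_left hκ.le ha hab.le
  have he : 0 < Real.exp (-(k * Real.log 2) / a) := Real.exp_pos _
  calc a * Real.exp (-(k * Real.log 2) / a) < b * Real.exp (-(k * Real.log 2) / a) :=
        mul_lt_mul_of_pos_right hab he
    _ ≤ b * Real.exp (-(k * Real.log 2) / b) := mul_le_mul_of_nonneg_left hexp hb.le

lemma myphi_le_iff {k : ℝ} (hk : 0 < k) {a b : ℝ} (ha : 0 < a) (hb : 0 < b) :
    a ≤ b ↔ myphi k a ≤ myphi k b := by
  constructor
  · intro h
    rcases eq_or_lt_of_le h with rfl | h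
    · exact le_rfl
    · exact (myphi_mono hk ha h).le
  · intro h
    by_contra hc
    push_neg at hc
    exact absurd h (not_le.mpr (myphi_mono hk hb hc))

lemma myphi_midpoint {k : ℝ} (hk : 0 < k) {a c : ℝ} (ha : 0 < a) (hc : 0 < c) :
    myphi k ((a + c) / 2) ≤ (myphi k a + myphi k c) / 2 := by
  set κ := k * Real.log 2 with hκdef
  have h2 : (0:ℝ) < Real.log 2 := Real.log_pos (by norm_num)
  have hκ : 0 < κ := by positivity
  set m := (a + c) / 2 with hm
  have hm0 : 0 < m := by positivity
  have key : ∀ x : ℝ, 0 < x → x + κ * x / m - κ ≤ x * Real.exp (κ / m - κ / x) := by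
    intro x hx
    have h1 : κ / m - κ / x + 1 ≤ Real.exp (κ / m - κ / x) := Real.add_one_le_exp _
    have h2 : x * (κ / m - κ / x + 1) ≤ x * Real.exp (κ / m - κ / x) :=
      mul_le_mul_of_nonneg_left h1 hx.le
    calc x + κ * x / m - κ = x * (κ / m - κ / x + 1) := by field_simp; ring
      _ ≤ _ := h2
  have ha' := key a ha
  have hc' := key c hc
  have hexp : (0:ℝ) < Real.exp (-(κ) / m) := Real.exp_pos _
  have expa : Real.exp (κ / m - κ / a) * Real.exp (-κ / m) = Real.exp (-κ / a) := by
    rw [← Real.exp_add]; ring_nf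
  have expc : Real.exp (κ / m - κ / c) * Real.exp (-κ / m) = Real.exp (-κ / c) := by
    rw [← Real.exp_add]; ring_nf
  have hsum : (a + κ * a / m - κ) + (c + κ * c / m - κ) = 2 * m := by
    field_simp [hm]; ring
  unfold myphi
  have final : 2 * (m * Real.exp (-κ / m)) ≤ a * Real.exp (-κ / a) + c * Real.exp (-κ / c) := by
    calc 2 * (m * Real.exp (-κ / m))
        = ((a + κ * a / m - κ) + (c + κ * c / m - κ)) * Real.exp (-κ / m) := by rw [hsum]; ring
      _ ≤ (a * Real.exp (κ / m - κ / a) + c * Real.exp (κ / m - κ / c)) * Real.exp (-κ / m) :=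
          mul_le_mul_of_nonneg_right (by linarith) hexp.le
      _ = a * Real.exp (-κ / a) + c * Real.exp (-κ / c) := by
          rw [add_mul, mul_assoc, mul_assoc, expa, expc]
  linarith

lemma myphi_half {k : ℝ} (hk : 0 < k) {c : ℝ} (hc : 0 < c) :
    myphi k (c / 2) ≤ myphi k c / 2 := by
  unfold myphi
  have h2 : (0:ℝ) < Real.log 2 := Real.log_pos (by norm_num)
  have hκ : 0 < k * Real.log 2 := by positivity
  have hle : Real.exp (-(k * Real.log 2) / (c / 2)) ≤ Real.exp (-(k * Real.log 2) / c) := by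
    apply Real.exp_le_exp.mpr
    rw [neg_div, neg_div, neg_le_neg_iff]
    apply div_le_div_of_nonneg_left hκ.le (by positivity)
    linarith
  calc c / 2 * Real.exp (-(k * Real.log 2) / (c / 2))
      ≤ c / 2 * Real.exp (-(k * Real.log 2) / c) :=
        mul_le_mul_of_nonneg_left hle (by positivity)
    _ = c * Real.exp (-(k * Real.log 2) / c) / 2 := by ring

lemma eq_myphi {k t A B : ℝ} (ht : 0 < t) (hA : 0 < A) (hB : 0 < B)
    (h : t * Real.logb 2 (A * t / B) = k) : myphi k t = B / A := by
  have h2 : (0:ℝ) < Real.log 2 := Real.log_pos (by norm_num)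
  have harg : 0 < A * t / B := by positivity
  have hlog : Real.log (A * t / B) = k * Real.log 2 / t := by
    have hlb : Real.logb 2 (A * t / B) = k / t := by
      field_simp at h ⊢; linarith
    rw [Real.logb] at hlb
    field_simp at hlb ⊢
    linarith
  have hexp : A * t / B = Real.exp (k * Real.log 2 / t) := by
    rw [← hlog, Real.exp_log harg]
  unfold myphi
  rw [neg_div, Real.exp_neg, ← hexp]
  field_simp


/-- For `16/N ≤ k < log₂ N`, the constructed distribution `P` on `[N]` satisfies
`D(P‖U_N) = k`. -/
theorem stmt6 (N : ℕ) (hN : 1 < N) (k : ℝ)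
    (hk16 : 16 / (N : ℝ) ≤ k) (hklog : k < Real.logb 2 N)
    (v : ℕ → ℝ)
    (hv : ∀ i ∈ Finset.Icc 1 N,
      0 < v i ∧ v i * Real.logb 2 ((N : ℝ) * v i / (i : ℝ)) = k)
    (s : ℕ → ℝ) (hs0 : s 0 = 0) (hs : ∀ i ∈ Finset.Icc 1 N, s i = min 1 (v i))
    (p : ℕ → ℝ) (hp : ∀ i ∈ Finset.Icc 1 N, p i = s i - s (i - 1))
    : obsDiv N p (unif N) = k := by
  classical
  have hN0 : (0:ℝ) < N := by positivity
  have hk0 : (0:ℝ) < k := lt_of_lt_of_le (by positivity) hk16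
  have h2 : (0:ℝ) < Real.log 2 := Real.log_pos (by norm_num)
  -- membership helper
  have hmem : ∀ i : ℕ, 1 ≤ i → i ≤ N → i ∈ Finset.Icc 1 N := by
    intro i h1 h2; exact Finset.mem_Icc.mpr ⟨h1, h2⟩
  have hvpos : ∀ i : ℕ, 1 ≤ i → i ≤ N → 0 < v i := fun i h1 h2 => (hv i (hmem i h1 h2)).1
  have hφ : ∀ i : ℕ, 1 ≤ i → i ≤ N → myphi k (v i) = (i : ℝ) / N := by
    intro i h1 h2
    have hi0 : (0:ℝ) < i := by exact_mod_cast h1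
    exact eq_myphi (hvpos i h1 h2) hN0 hi0 (hv i (hmem i h1 h2)).2
  have hvle : ∀ i j : ℕ, 1 ≤ i → j ≤ N → i ≤ j → v i ≤ v j := by
    intro i j h1 h2 hij
    have hj1 : 1 ≤ j := le_trans h1 hij
    have hiN : i ≤ N := le_trans hij h2
    rw [myphi_le_iff hk0 (hvpos i h1 hiN) (hvpos j hj1 h2), hφ i h1 hiN, hφ j hj1 h2]
    have : (i:ℝ) ≤ (j:ℝ) := by exact_mod_cast hij
    gcongr
  -- v 1 < 1
  have hv1 : v 1 < 1 := by
    have hφ1 : myphi k (v 1) = 1 / N := by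
      have := hφ 1 le_rfl (le_of_lt hN); simpa using this
    have hklogN : k * Real.log 2 < Real.log N := by
      rw [Real.logb, lt_div_iff₀ h2] at hklog; linarith
    have hexplt : Real.exp (k * Real.log 2) < N := by
      rw [← Real.exp_log hN0]
      exact Real.exp_lt_exp.mpr hklogN
    have hlt : myphi k (v 1) < myphi k 1 := by
      rw [hφ1]
      unfold myphi
      rw [div_one, one_mul, Real.exp_neg, ← one_div]
      exact one_div_lt_one_div_of_lt (Real.exp_pos _) hexplt
    by_contra hc
    push_neg at hc
    exact absurd hlt (not_lt.mpr ((myphi_le_iff hk0 one_pos (hvpos 1 le_rfl hN.le)).mp hc))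
  -- s values and monotonicity
  have hsval : ∀ i, 1 ≤ i → i ≤ N → s i = min 1 (v i) := fun i h1 h2 => hs i (hmem i h1 h2)
  have hsmono : ∀ i, i < N → s i ≤ s (i + 1) := by
    intro i hiN
    rcases Nat.eq_zero_or_pos i with rfl | h1
    · rw [hs0, hsval 1 le_rfl hN.le]
      have hv1p := hvpos 1 le_rfl hN.le
      exact le_min (by norm_num) hv1p.le
    · rw [hsval i h1 (le_of_lt hiN), hsval (i+1) (by omega) (by omega)]
      exact min_le_min le_rfl (hvle i (i+1) h1 (by omega) (by omega))
  have hp0 : ∀ i, 1 ≤ i → i ≤ N → 0 ≤ p i := by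
    intro i h1 hiN
    rw [hp i (hmem i h1 hiN)]
    have hle : s (i - 1) ≤ s i := by
      have h := hsmono (i-1) (by omega)
      have he : i - 1 + 1 = i := by omega
      rwa [he] at h
    linarith
  -- step antitonicity
  have hstep : ∀ i, 1 ≤ i → i + 1 ≤ N → p (i + 1) ≤ p i := by
    intro i h1 hiN
    have hiN' : i ≤ N := by omega
    rw [hp i (hmem i h1 hiN'), hp (i+1) (hmem (i+1) (by omega) hiN)]
    simp only [Nat.add_sub_cancel]
    by_cases hvi1 : 1 ≤ v i
    · have e1 : s i = 1 := by rw [hsval i h1 hiN']; exact min_eq_left hvi1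
      have e2 : s (i+1) = 1 := by
        rw [hsval (i+1) (by omega) hiN]
        exact min_eq_left (le_trans hvi1 (hvle i (i+1) h1 hiN (by omega)))
      have e3 : s (i - 1) ≤ 1 := by
        rcases Nat.eq_zero_or_pos (i-1) with h0 | hpos
        · rw [h0, hs0]; norm_num
        · rw [hsval (i-1) hpos (by omega)]; exact min_le_left _ _
      rw [e1, e2]; linarith
    · push_neg at hvi1
      have e1 : s i = v i := by rw [hsval i h1 hiN']; exact min_eq_right hvi1.le
      have e2 : s (i+1) ≤ v (i+1) := by
        rw [hsval (i+1) (by omega) hiN]; exact min_le_right _ _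
      rcases eq_or_lt_of_le h1 with h1e | h1lt
      · -- i = 1
        obtain rfl : i = 1 := h1e.symm
        have h2N : 2 ≤ N := hiN
        have hv2p : 0 < v 2 := hvpos 2 (by omega) h2N
        have hkey : v 2 / 2 ≤ v 1 := by
          rw [myphi_le_iff hk0 (by positivity) (hvpos 1 le_rfl hN.le)]
          calc myphi k (v 2 / 2) ≤ myphi k (v 2) / 2 := myphi_half hk0 hv2p
            _ = ((2:ℕ):ℝ)/N / 2 := by rw [hφ 2 (by omega) h2N]
            _ = 1 / N := by push_cast; ring
            _ = myphi k (v 1) := by rw [hφ 1 le_rfl hN.le]; norm_num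
        simp only [Nat.sub_self, hs0, e1]
        linarith
      · -- 2 ≤ i
        have hi2 : 2 ≤ i := h1lt
        have e3 : s (i-1) = v (i-1) := by
          rw [hsval (i-1) (by omega) (by omega)]
          exact min_eq_right
            (le_trans (hvle (i-1) i (by omega) hiN' (by omega)) hvi1.le)
        have hvm1p : 0 < v (i-1) := hvpos (i-1) (by omega) (by omega)
        have hvp1p : 0 < v (i+1) := hvpos (i+1) (by omega) hiN
        have hconc : (v (i-1) + v (i+1)) / 2 ≤ v i := by
          rw [myphi_le_iff hk0 (by positivity) (hvpos i h1 hiN')]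
          calc myphi k ((v (i-1) + v (i+1))/2)
              ≤ (myphi k (v (i-1)) + myphi k (v (i+1)))/2 :=
                myphi_midpoint hk0 hvm1p hvp1p
            _ = (((i-1:ℕ):ℝ)/N + ((i+1:ℕ):ℝ)/N)/2 := by
                rw [hφ (i-1) (by omega) (by omega), hφ (i+1) (by omega) hiN]
            _ = (i:ℝ)/N := by
                have hc : ((i-1:ℕ):ℝ) = (i:ℝ) - 1 := by
                  have : (1:ℕ) ≤ i := h1
                  push_cast [Nat.cast_sub this]
                  ring
                rw [hc]; push_cast; field_simp; ring
            _ = myphi k (v i) := (hφ i h1 hiN').symm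
        rw [e1, e3]
        linarith
  -- telescoping
  have htel : ∀ m, m ≤ N → ∑ j ∈ Finset.range m, p (j + 1) = s m := by
    intro m hm
    have hcong : ∀ j ∈ Finset.range m, p (j+1) = s (j+1) - s j := by
      intro j hj
      have hjm := Finset.mem_range.mp hj
      rw [hp (j+1) (hmem (j+1) (by omega) (by omega))]
      simp
    rw [Finset.sum_congr rfl hcong, Finset.sum_range_sub s m, hs0, sub_zero]
  -- full antitonicity
  have hanti : ∀ a b, 1 ≤ a → a ≤ b → b ≤ N → p b ≤ p a := by
    intro a b h1 hab hbN
    induction b with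
    | zero => omega
    | succ c ih =>
      rcases eq_or_lt_of_le hab with rfl | hlt
      · exact le_rfl
      · exact le_trans (hstep c (by omega) hbN) (ih (by omega) (by omega))
  -- rearrangement bound
  have hEble : ∀ E : Finset ℕ, E ⊆ Finset.Icc 1 N → ∑ i ∈ E, p i ≤ s E.card := by
    intro E hE
    set m := E.card with hm
    have hmN : m ≤ N := by
      have h := Finset.card_le_card hE
      rwa [Nat.card_Icc, Nat.add_sub_cancel] at h
    let e := E.orderIsoOfFin hm.symm
    have hej : ∀ j : Fin m, (j:ℕ) + 1 ≤ ((e j : ℕ)) := by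
      intro j
      obtain ⟨jv, hjv⟩ := j
      induction jv with
      | zero =>
        have hin := hE (e ⟨0, hjv⟩).2
        exact (Finset.mem_Icc.mp hin).1
      | succ n ihn =>
        have hn : n < m := Nat.lt_of_succ_lt hjv
        have h2' := ihn hn
        have hlt' : ((e ⟨n, hn⟩ : ℕ)) < ((e ⟨n+1, hjv⟩ : ℕ)) := by
          have hfin : (⟨n, hn⟩ : Fin m) < ⟨n+1, hjv⟩ := by simp [Fin.mk_lt_mk]
          exact_mod_cast e.strictMono hfin
        simp only [Fin.val_mk] at h2' hlt' ⊢
        omega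
    have hub1 : ∀ j : Fin m, p (e j) ≤ p ((j:ℕ)+1) := by
      intro j
      have hmem' := hE (e j).2
      obtain ⟨ha', hb'⟩ := Finset.mem_Icc.mp hmem'
      exact hanti ((j:ℕ)+1) (e j) (by omega) (hej j) hb'
    calc ∑ i ∈ E, p i = ∑ i : {x // x ∈ E}, p i := (Finset.sum_coe_sort E p).symm
      _ = ∑ j : Fin m, p (e j) :=
          (Fintype.sum_equiv e.toEquiv (fun j => p (e j)) (fun i => p i) (fun j => rfl)).symm
      _ ≤ ∑ j : Fin m, p ((j:ℕ)+1) := Finset.sum_le_sum (fun j _ => hub1 j)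
      _ = ∑ j ∈ Finset.range m, p (j+1) := Fin.sum_univ_eq_sum_range (fun j => p (j+1)) m
      _ = s m := htel m hmN
  -- upper bound for every event
  have hub : ∀ E ∈ (Finset.Icc 1 N).powerset,
      (∑ i ∈ E, p i) * Real.logb 2 ((∑ i ∈ E, p i) / (∑ i ∈ E, unif N i)) ≤ k := by
    intro E hEp
    have hE : E ⊆ Finset.Icc 1 N := Finset.mem_powerset.mp hEp
    rcases Finset.eq_empty_or_nonempty E with rfl | hne
    · simpa using hk0.le
    · set m := E.card with hm
      have hm1 : 1 ≤ m := Finset.card_pos.mpr hne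
      have hmN : m ≤ N := by
        have h := Finset.card_le_card hE
        rwa [Nat.card_Icc, Nat.add_sub_cancel] at h
      have hq : ∑ i ∈ E, unif N i = (m:ℝ) / N := by
        simp only [unif, Finset.sum_const, ← hm, nsmul_eq_mul]
        rw [div_eq_mul_inv]
      set x := ∑ i ∈ E, p i with hx
      have hx0 : 0 ≤ x := Finset.sum_nonneg (fun i hi => by
        obtain ⟨ha', hb'⟩ := Finset.mem_Icc.mp (hE hi)
        exact hp0 i ha' hb')
      have hxle : x ≤ v m := by
        calc x ≤ s m := hEble E hE
          _ ≤ v m := by rw [hsval m hm1 hmN]; exact min_le_right _ _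
      have hvm : 0 < v m := hvpos m hm1 hmN
      have hm0 : (0:ℝ) < (m:ℝ)/N := by positivity
      rcases eq_or_lt_of_le hx0 with hx0' | hx0'
      · rw [← hx0']; simpa using hk0.le
      · rw [hq]
        by_cases hcmp : x ≤ (m:ℝ)/N
        · have hlogb : Real.logb 2 (x / ((m:ℝ)/N)) ≤ 0 :=
            Real.logb_nonpos (by norm_num) (by positivity)
              (by rw [div_le_one hm0]; exact hcmp)
          nlinarith
        · have hmp : (0:ℝ) < m := by exact_mod_cast hm1
          have hlmono : Real.logb 2 (x / ((m:ℝ)/N)) ≤ Real.logb 2 ((N:ℝ) * v m / m) := by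
            apply (Real.logb_le_logb (by norm_num) (by positivity) (by positivity)).mpr
            rw [div_div_eq_mul_div]
            rw [mul_comm x (N:ℝ)]
            gcongr
          have hlval : Real.logb 2 ((N:ℝ) * v m / m) = k / v m := by
            have hh := (hv m (hmem m hm1 hmN)).2
            rw [eq_div_iff hvm.ne']
            linarith [hh]
          calc x * Real.logb 2 (x / ((m:ℝ)/N)) ≤ x * (k / v m) := by
                rw [← hlval]; exact mul_le_mul_of_nonneg_left hlmono hx0
            _ ≤ v m * (k / v m) := mul_le_mul_of_nonneg_right hxle (by positivity)
            _ = k := by field_simp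
  -- lower bound via E = {1}
  have h1mem : ({1} : Finset ℕ) ∈ (Finset.Icc 1 N).powerset := by
    rw [Finset.mem_powerset, Finset.singleton_subset_iff]
    exact hmem 1 le_rfl hN.le
  have hp1 : p 1 = v 1 := by
    rw [hp 1 (hmem 1 le_rfl hN.le)]
    norm_num [hs0, hsval 1 le_rfl hN.le, min_eq_right hv1.le]
  have hval : (∑ i ∈ ({1}:Finset ℕ), p i) *
      Real.logb 2 ((∑ i ∈ ({1}:Finset ℕ), p i) / (∑ i ∈ ({1}:Finset ℕ), unif N i)) = k := by
    have hh := (hv 1 (hmem 1 le_rfl hN.le)).2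
    simp only [Finset.sum_singleton, hp1, unif]
    have harg : v 1 / (↑N)⁻¹ = (↑N:ℝ) * v 1 := by field_simp
    rw [harg]
    simpa using hh
  unfold obsDiv
  apply le_antisymm
  · exact Finset.sup'_le _ _ hub
  · calc k = _ := hval.symm
      _ ≤ _ := Finset.le_sup'
          (f := fun E => (∑ i ∈ E, p i) * Real.logb 2 ((∑ i ∈ E, p i) / ∑ i ∈ E, unif N i))
          h1mem
end

section
/- Fix an integer N > 1 and a real k with 16/N ≤ k < log₂ N, and let P be the constructed distribution on [N]. Then the relative entropy of P with respect to the uniform distribution satisfies S(P‖U_N) ≤ k·(ln log₂(Nk) − ln k + 1). -/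
/-- Auxiliary contradiction: two solutions of `x·log₂(c_x) = k` can't be strictly
ordered together with their log arguments (when the smaller log is positive). -/
lemma auxContra (k a b c d : ℝ) (ha : 0 < a) (hab : a < b)
    (hcd : Real.logb 2 c < Real.logb 2 d) (hc : 0 < Real.logb 2 c)
    (h1 : a * Real.logb 2 c = k) (h2 : b * Real.logb 2 d = k) : False := by
  nlinarith [mul_lt_mul_of_pos_right hab hc, mul_lt_mul_of_pos_left hcd (ha.trans hab)]

/-- Telescoping sum over `Icc 2 N`. -/
lemma auxTele (G : ℕ → ℝ) : ∀ N : ℕ, 1 ≤ N →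
    ∑ i ∈ Finset.Icc 2 N, (G i - G (i - 1)) = G N - G 1 := by
  intro N
  induction N with
  | zero => intro h; exact absurd h (by norm_num)
  | succ n ih =>
    intro _
    rcases Nat.eq_or_lt_of_le (Nat.one_le_iff_ne_zero.mpr (Nat.succ_ne_zero n) : 1 ≤ n + 1)
      with h | h
    · rw [← h]; simp
    · have hn : 1 ≤ n := by omega
      rw [Finset.sum_Icc_succ_top (by omega : 2 ≤ n + 1), ih hn]
      simp

set_option maxHeartbeats 1000000 in
/-- For `16/N ≤ k < log₂ N`, the constructed distribution `P` on `[N]` satisfies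
`S(P‖U_N) ≤ k·(ln log₂(Nk) − ln k + 1)`. -/
theorem stmt8 (N : ℕ) (hN : 1 < N) (k : ℝ)
    (hk16 : 16 / (N : ℝ) ≤ k) (hklog : k < Real.logb 2 N)
    (v : ℕ → ℝ)
    (hv : ∀ i ∈ Finset.Icc 1 N,
      0 < v i ∧ v i * Real.logb 2 ((N : ℝ) * v i / (i : ℝ)) = k)
    (s : ℕ → ℝ) (hs0 : s 0 = 0) (hs : ∀ i ∈ Finset.Icc 1 N, s i = min 1 (v i))
    (p : ℕ → ℝ) (hp : ∀ i ∈ Finset.Icc 1 N, p i = s i - s (i - 1))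
    : relEnt N p (unif N) ≤ k * (Real.log (Real.logb 2 ((N : ℝ) * k)) - Real.log k + 1) := by
  have hN1 : 1 ≤ N := hN.le
  have hNR : (1:ℝ) < (N:ℝ) := by exact_mod_cast hN
  have hN0 : (0:ℝ) < (N:ℝ) := by linarith
  have hk0 : (0:ℝ) < k := lt_of_lt_of_le (by positivity) hk16
  have hNk16 : (16:ℝ) ≤ (N:ℝ) * k := by
    rw [div_le_iff₀ hN0] at hk16; linarith
  set L : ℝ := Real.logb 2 ((N:ℝ) * k) with hLdef
  -- L ≥ 4
  have h16 : Real.logb 2 (16:ℝ) = 4 := by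
    rw [show (16:ℝ) = 2 ^ (4:ℕ) by norm_num, Real.logb, Real.log_pow]
    field_simp [Real.logb]; norm_num
  have hL4 : (4:ℝ) ≤ L := by
    rw [← h16, hLdef]
    exact (Real.logb_le_logb one_lt_two (by norm_num) (by linarith)).mpr hNk16
  have hL0 : (0:ℝ) < L := by linarith
  -- k ≤ L
  have hkL : k ≤ L := by
    rcases le_or_gt k 1 with h | h
    · linarith
    · have hlk : 0 < Real.logb 2 k := Real.logb_pos one_lt_two h
      have : L = Real.logb 2 (N:ℝ) + Real.logb 2 k :=
        Real.logb_mul (by positivity) (by positivity)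
      linarith
  -- the equation at index 1
  have h1mem : 1 ∈ Finset.Icc 1 N := by rw [Finset.mem_Icc]; omega
  obtain ⟨hv1, he1⟩ := hv 1 h1mem
  rw [Nat.cast_one, div_one] at he1
  have hlog1 : Real.logb 2 ((N:ℝ) * v 1) = k / v 1 := by
    rw [eq_div_iff hv1.ne']; linarith
  -- v 1 ≥ k / L
  have hv1c : k / L ≤ v 1 := by
    by_contra hlt
    push_neg at hlt
    have hX : 0 < Real.logb 2 ((N:ℝ) * v 1) := by rw [hlog1]; positivity
    have hmono : Real.logb 2 ((N:ℝ) * v 1) < Real.logb 2 ((N:ℝ) * (k / L)) :=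
      Real.logb_lt_logb one_lt_two (by positivity) (by
        exact mul_lt_mul_of_pos_left hlt hN0)
    have hNc : Real.logb 2 ((N:ℝ) * (k / L)) = L - Real.logb 2 L := by
      rw [show (N:ℝ) * (k / L) = ((N:ℝ) * k) / L by ring,
        Real.logb_div (by positivity) hL0.ne']
    have hlogL : 0 ≤ Real.logb 2 L := Real.logb_nonneg one_lt_two (by linarith)
    have e1 : v 1 * Real.logb 2 ((N:ℝ) * v 1) < (k / L) * Real.logb 2 ((N:ℝ) * v 1) :=
      mul_lt_mul_of_pos_right hlt hX
    have e2 : (k / L) * Real.logb 2 ((N:ℝ) * v 1) < (k / L) * (L - Real.logb 2 L) := by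
      rw [← hNc]; exact mul_lt_mul_of_pos_left hmono (by positivity)
    have e3 : (k / L) * (L - Real.logb 2 L) ≤ (k / L) * L :=
      mul_le_mul_of_nonneg_left (by linarith) (by positivity)
    have e4 : (k / L) * L = k := div_mul_cancel₀ k hL0.ne'
    linarith
  -- basic facts about s
  have hsle : ∀ i ∈ Finset.Icc 1 N, s i ≤ v i := by
    intro i hi; rw [hs i hi]; exact min_le_right _ _
  have hspos : ∀ i ∈ Finset.Icc 1 N, 0 < s i := by
    intro i hi; rw [hs i hi]; exact lt_min one_pos (hv i hi).1
  have hsle1 : ∀ i ∈ Finset.Icc 1 N, s i ≤ 1 := by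
    intro i hi; rw [hs i hi]; exact min_le_left _ _
  -- s N = 1
  have hNmem : N ∈ Finset.Icc 1 N := by rw [Finset.mem_Icc]; omega
  obtain ⟨hvN, heN⟩ := hv N hNmem
  have hvN1 : 1 ≤ v N := by
    by_contra hlt
    push_neg at hlt
    have hcan : (N:ℝ) * v N / (N:ℝ) = v N := by field_simp
    rw [hcan] at heN
    have : Real.logb 2 (v N) < 0 := Real.logb_neg one_lt_two hvN hlt
    nlinarith
  have hsN : s N = 1 := by rw [hs N hNmem]; exact min_eq_left hvN1
  -- monotonicity facts, for i ∈ Icc 2 N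
  have hfacts : ∀ i ∈ Finset.Icc 2 N,
      v (i - 1) ≤ v i ∧ v i * ((i:ℝ) - 1) ≤ v (i - 1) * (i:ℝ) := by
    intro i hi
    rw [Finset.mem_Icc] at hi
    have hiR : (2:ℝ) ≤ (i:ℝ) := by exact_mod_cast hi.1
    have hmem : i ∈ Finset.Icc 1 N := by rw [Finset.mem_Icc]; omega
    have hmem' : i - 1 ∈ Finset.Icc 1 N := by rw [Finset.mem_Icc]; omega
    obtain ⟨hvi, hei⟩ := hv i hmem
    obtain ⟨hvj, hej⟩ := hv (i - 1) hmem'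
    have hcast : ((i - 1 : ℕ):ℝ) = (i:ℝ) - 1 := by
      rw [Nat.cast_sub (by omega : 1 ≤ i), Nat.cast_one]
    rw [hcast] at hej
    have hLi : Real.logb 2 ((N:ℝ) * v i / (i:ℝ)) = k / v i := by
      rw [eq_div_iff hvi.ne']; linarith
    have hLj : Real.logb 2 ((N:ℝ) * v (i - 1) / ((i:ℝ) - 1)) = k / v (i - 1) := by
      rw [eq_div_iff hvj.ne']; linarith
    constructor
    · by_contra hlt
      push_neg at hlt
      have hcd : (N:ℝ) * v i / (i:ℝ) < (N:ℝ) * v (i - 1) / ((i:ℝ) - 1) := by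
        rw [div_lt_div_iff₀ (by linarith) (by linarith)]
        have h1 : (N:ℝ) * v i * ((i:ℝ) - 1) < (N:ℝ) * v (i - 1) * ((i:ℝ) - 1) :=
          mul_lt_mul_of_pos_right (mul_lt_mul_of_pos_left hlt hN0) (by linarith)
        have h2 : (N:ℝ) * v (i - 1) * ((i:ℝ) - 1) ≤ (N:ℝ) * v (i - 1) * (i:ℝ) :=
          mul_le_mul_of_nonneg_left (by linarith) (by positivity)
        linarith
      refine auxContra k (v i) (v (i - 1)) _ _ hvi hlt
        (Real.logb_lt_logb one_lt_two (div_pos (by positivity) (by linarith)) hcd) ?_ hei hej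
      rw [hLi]; positivity
    · by_contra hlt
      push_neg at hlt
      have hab : v (i - 1) < v i := by
        have h2 : v i * ((i:ℝ) - 1) ≤ v i * (i:ℝ) :=
          mul_le_mul_of_nonneg_left (by linarith) hvi.le
        exact lt_of_mul_lt_mul_right (by linarith) (by linarith : (0:ℝ) ≤ (i:ℝ))
      have hcd : (N:ℝ) * v (i - 1) / ((i:ℝ) - 1) < (N:ℝ) * v i / (i:ℝ) := by
        rw [div_lt_div_iff₀ (by linarith) (by linarith)]
        have h1 := mul_lt_mul_of_pos_left hlt hN0
        nlinarith [h1]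
      refine auxContra k (v (i - 1)) (v i) _ _ hvj hab
        (Real.logb_lt_logb one_lt_two (div_pos (by positivity) (by linarith)) hcd) ?_ hej hei
      rw [hLj]; positivity
  -- the per-term bound for i ∈ Icc 2 N
  have hterm : ∀ i ∈ Finset.Icc 2 N,
      p i * Real.logb 2 (p i * (N:ℝ)) ≤ k * (Real.log (s i) - Real.log (s (i - 1))) := by
    intro i hi
    obtain ⟨hmono, hratio⟩ := hfacts i hi
    rw [Finset.mem_Icc] at hi
    have hiR : (2:ℝ) ≤ (i:ℝ) := by exact_mod_cast hi.1
    have hmem : i ∈ Finset.Icc 1 N := by rw [Finset.mem_Icc]; omega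
    have hmem' : i - 1 ∈ Finset.Icc 1 N := by rw [Finset.mem_Icc]; omega
    obtain ⟨hvi, hei⟩ := hv i hmem
    obtain ⟨hvj, _⟩ := hv (i - 1) hmem'
    have ha : 0 < s (i - 1) := hspos _ hmem'
    have hb : 0 < s i := hspos _ hmem
    have hab : s (i - 1) ≤ s i := by
      rw [hs i hmem, hs (i - 1) hmem']
      exact min_le_min le_rfl hmono
    have hps : p i = s i - s (i - 1) := hp i hmem
    rcases eq_or_lt_of_le hab with heq | hlt
    · rw [hps, ← heq]; simp
    · have hpi : 0 < p i := by rw [hps]; linarith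
      -- p i ≤ v i / i
      have hA : p i ≤ v i / (i:ℝ) := by
        have pa : p i ≤ v i - v (i - 1) := by
          rw [hps, hs i hmem, hs (i - 1) hmem']
          rcases le_total (v i) 1 with h | h <;> rcases le_total (v (i - 1)) 1 with h' | h' <;>
            simp [min_eq_left, min_eq_right, h, h'] <;> linarith
        rw [le_div_iff₀ (by linarith : (0:ℝ) < (i:ℝ))]
        nlinarith
      have hLi : Real.logb 2 ((N:ℝ) * v i / (i:ℝ)) = k / v i := by
        rw [eq_div_iff hvi.ne']; linarith
      -- logb bound
      have hB : Real.logb 2 (p i * (N:ℝ)) ≤ k / v i := by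
        rw [← hLi]
        refine (Real.logb_le_logb one_lt_two (by positivity) (by positivity)).mpr ?_
        calc p i * (N:ℝ) = (N:ℝ) * p i := by ring
          _ ≤ (N:ℝ) * (v i / (i:ℝ)) := mul_le_mul_of_nonneg_left hA hN0.le
          _ = (N:ℝ) * v i / (i:ℝ) := by ring
      have hC : k / v i ≤ k / s i := by
        apply div_le_div_of_nonneg_left hk0.le hb (hsle i hmem)
      have hD : p i * Real.logb 2 (p i * (N:ℝ)) ≤ p i * (k / s i) :=
        mul_le_mul_of_nonneg_left (hB.trans hC) hpi.le
      have hlog : Real.log (s (i - 1)) - Real.log (s i) ≤ s (i - 1) / s i - 1 := by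
        have := Real.log_le_sub_one_of_pos (show 0 < s (i - 1) / s i by positivity)
        rwa [Real.log_div ha.ne' hb.ne'] at this
      have hE : p i * (k / s i) ≤ k * (Real.log (s i) - Real.log (s (i - 1))) := by
        have h1 : p i * (k / s i) = k * (1 - s (i - 1) / s i) := by
          rw [hps]; field_simp
        rw [h1]
        exact mul_le_mul_of_nonneg_left (by linarith) hk0.le
      exact hD.trans hE
  -- term at 1
  have hp1 : p 1 = s 1 := by rw [hp 1 h1mem]; simp [hs0]
  have hs1pos : 0 < s 1 := hspos 1 h1mem
  have hs1v : s 1 ≤ v 1 := hsle 1 h1mem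
  have hterm1 : p 1 * Real.logb 2 (p 1 * (N:ℝ)) ≤ k := by
    rw [hp1]
    have hB : Real.logb 2 (s 1 * (N:ℝ)) ≤ k / v 1 := by
      rw [← hlog1]
      refine (Real.logb_le_logb one_lt_two (by positivity) (by positivity)).mpr ?_
      nlinarith
    calc s 1 * Real.logb 2 (s 1 * (N:ℝ)) ≤ s 1 * (k / v 1) :=
          mul_le_mul_of_nonneg_left hB hs1pos.le
      _ ≤ v 1 * (k / v 1) := mul_le_mul_of_nonneg_right hs1v (by positivity)
      _ = k := by field_simp
  -- rewrite relEnt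
  have hrw : relEnt N p (unif N) = ∑ i ∈ Finset.Icc 1 N, p i * Real.logb 2 (p i * (N:ℝ)) := by
    unfold relEnt unif
    refine Finset.sum_congr rfl fun i _ => ?_
    rw [div_eq_mul_inv, inv_inv]
  have hsplit : Finset.Icc 1 N = insert 1 (Finset.Icc 2 N) := by
    ext j; simp only [Finset.mem_Icc, Finset.mem_insert]; omega
  have h1not : 1 ∉ Finset.Icc 2 N := by simp
  rw [hrw, hsplit, Finset.sum_insert h1not]
  have htail : ∑ i ∈ Finset.Icc 2 N, p i * Real.logb 2 (p i * (N:ℝ))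
      ≤ k * (0 - Real.log (s 1)) := by
    calc ∑ i ∈ Finset.Icc 2 N, p i * Real.logb 2 (p i * (N:ℝ))
        ≤ ∑ i ∈ Finset.Icc 2 N, k * (Real.log (s i) - Real.log (s (i - 1))) :=
          Finset.sum_le_sum hterm
      _ = k * ∑ i ∈ Finset.Icc 2 N, (Real.log (s i) - Real.log (s (i - 1))) := by
          rw [Finset.mul_sum]
      _ = k * (Real.log (s N) - Real.log (s 1)) := by
          rw [auxTele (fun i => Real.log (s i)) N hN1]
      _ = k * (0 - Real.log (s 1)) := by rw [hsN, Real.log_one]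
  have hfinal : 0 - Real.log (s 1) ≤ Real.log L - Real.log k := by
    have h1 : Real.log (k / L) ≤ Real.log (s 1) :=
      Real.log_le_log (by positivity) (by linarith [hv1c, hsle1 1 h1mem, hs1v,
        (le_min (by rw [div_le_one hL0]; exact hkL) hv1c).trans_eq (hs 1 h1mem).symm])
    rw [Real.log_div hk0.ne' hL0.ne'] at h1
    linarith
  have : k * (0 - Real.log (s 1)) ≤ k * (Real.log L - Real.log k) :=
    mul_le_mul_of_nonneg_left hfinal hk0.le
  linarith [hterm1, htail]
end

section
/- Fix an integer N > 1 and a real k > 0, and let s_1,…,s_N be the cumulative sums of the constructed distribution P on [N]. Then P majorises every distribution of bounded divergence: for every probability distribution R on [N] with D(R‖U_N) ≤ k, and for every i ∈ [N], the sum of the i largest probabilities of R is at most s_i. -/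
/-- The constructed distribution majorises every distribution of bounded divergence:
if `D(R‖U_N) ≤ k` then, for each `i ∈ [N]`, the sum of the `i` largest
probabilities of `R` is at most `s_i`. -/
theorem stmt12 (N : ℕ) (hN : 1 < N) (k : ℝ) (hk : 0 < k)
    (v : ℕ → ℝ)
    (hv : ∀ i ∈ Finset.Icc 1 N,
      0 < v i ∧ v i * Real.logb 2 ((N : ℝ) * v i / (i : ℝ)) = k)
    (s : ℕ → ℝ) (hs0 : s 0 = 0) (hs : ∀ i ∈ Finset.Icc 1 N, s i = min 1 (v i))
    (p : ℕ → ℝ) (hp : ∀ i ∈ Finset.Icc 1 N, p i = s i - s (i - 1)) :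
    ∀ R : ℕ → ℝ, IsProbOn N R → obsDiv N R (unif N) ≤ k →
      ∀ i ∈ Finset.Icc 1 N, ∀ E ⊆ Finset.Icc 1 N, E.card = i →
        ∑ j ∈ E, R j ≤ s i := by
  intro R hR hD i hi E hE hcard
  obtain ⟨hi1, hiN⟩ := Finset.mem_Icc.mp hi
  have hN0 : (0:ℝ) < N := by exact_mod_cast Nat.lt_of_lt_of_le Nat.zero_lt_one hN.le
  have hi0 : (0:ℝ) < i := by exact_mod_cast hi1
  set t := ∑ j ∈ E, R j with ht
  have ht1 : t ≤ 1 := by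
    calc t ≤ ∑ j ∈ Finset.Icc 1 N, R j :=
          Finset.sum_le_sum_of_subset_of_nonneg hE (fun j hj _ => hR.1 j hj)
      _ = 1 := hR.2
  by_contra hlt
  push_neg at hlt
  rw [hs i hi] at hlt
  have hvt : v i < t := by
    rcases le_total 1 (v i) with h | h
    · rw [min_eq_left h] at hlt; linarith
    · rw [min_eq_right h] at hlt; exact hlt
  obtain ⟨hv0, hvk⟩ := hv i hi
  have ht0 : 0 < t := lt_trans hv0 hvt
  have hu : ∑ j ∈ E, unif N j = (i:ℝ) / N := by
    simp [unif, Finset.sum_const, hcard, div_eq_mul_inv]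
  have hlogv : 0 < Real.logb 2 ((N:ℝ) * v i / i) := by
    by_contra h
    push_neg at h
    nlinarith
  have hvpos : 0 < (N:ℝ) * v i / i := by positivity
  have hmono : Real.logb 2 ((N:ℝ) * v i / i) < Real.logb 2 ((N:ℝ) * t / i) :=
    Real.logb_lt_logb one_lt_two hvpos (by gcongr)
  have harg : t / ((i:ℝ) / N) = (N:ℝ) * t / i := by
    field_simp
  have hkey : k < t * Real.logb 2 (t / ∑ j ∈ E, unif N j) := by
    rw [hu, harg, ← hvk]
    nlinarith
  have hle : t * Real.logb 2 (t / ∑ j ∈ E, unif N j) ≤ obsDiv N R (unif N) :=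
    by
      unfold obsDiv
      exact Finset.le_sup'
        (fun E => (∑ j ∈ E, R j) * Real.logb 2 ((∑ j ∈ E, R j) / (∑ j ∈ E, unif N j)))
        (Finset.mem_powerset.mpr hE)
  linarith
end

section
/- Let N > 1 be an integer and let Q be a probability distribution on [N] whose observational divergence k = D(Q‖U_N) satisfies k ≥ 16/N. Then the relative entropy satisfies S(Q‖U_N) ≤ k·(ln log₂(Nk) − ln k + 1). -/
open MeasureTheory

/-- For any distribution `Q` on `[N]`, `N > 1`, whose divergence `k = D(Q‖U_N)`
satisfies `k ≥ 16/N`, one has `S(Q‖U_N) ≤ k·(ln log₂(Nk) − ln k + 1)`. -/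
theorem stmt13 (N : ℕ) (hN : 1 < N) (Q : ℕ → ℝ) (hQ : IsProbOn N Q)
    (k : ℝ) (hk : k = obsDiv N Q (unif N)) (hk16 : 16 / (N : ℝ) ≤ k) :
    relEnt N Q (unif N) ≤ k * (Real.log (Real.logb 2 ((N : ℝ) * k)) - Real.log k + 1) := by
  obtain ⟨hQ0, hQ1⟩ := hQ
  have h12 : (1:ℝ) < 2 := one_lt_two
  have hN0 : (0:ℝ) < N := by exact_mod_cast Nat.zero_lt_of_lt hN
  have hk0 : 0 < k := lt_of_lt_of_le (by positivity) hk16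
  have hNk : (16:ℝ) ≤ (N:ℝ) * k := by
    rw [div_le_iff₀ hN0] at hk16; linarith
  set L := Real.logb 2 ((N:ℝ) * k) with hLdef
  have h16 : Real.logb 2 (16:ℝ) = 4 := by
    rw [show (16:ℝ) = 2 ^ (4:ℝ) by
      rw [show (4:ℝ) = ((4:ℕ):ℝ) by norm_num, Real.rpow_natCast]; norm_num]
    exact Real.logb_rpow (by norm_num) (by norm_num)
  have hL4 : (4:ℝ) ≤ L := by
    rw [← h16]; exact Real.logb_le_logb_of_le h12 (by norm_num) hNk
  have hL0 : (0:ℝ) < L := by linarith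
  -- the sup' bound for every event
  have hsup : ∀ E ∈ (Finset.Icc 1 N).powerset,
      (∑ i ∈ E, Q i) * Real.logb 2 ((∑ i ∈ E, Q i) / (∑ i ∈ E, unif N i)) ≤ k := by
    intro E hE
    rw [hk]
    exact Finset.le_sup'
      (fun E => (∑ i ∈ E, Q i) * Real.logb 2 ((∑ i ∈ E, Q i) / (∑ i ∈ E, unif N i))) hE
  have hUsum : ∀ E : Finset ℕ, ∑ i ∈ E, unif N i = (E.card : ℝ) / N := by
    intro E
    simp [unif, Finset.sum_const, nsmul_eq_mul, div_eq_mul_inv]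
  -- singleton bound
  have hsingle : ∀ i ∈ Finset.Icc 1 N, Q i * Real.logb 2 ((N:ℝ) * Q i) ≤ k := by
    intro i hi
    have h := hsup {i} (Finset.mem_powerset.2 (Finset.singleton_subset_iff.2 hi))
    have h2 : Q i / unif N i = (N:ℝ) * Q i := by
      simp [unif, div_inv_eq_mul, mul_comm]
    simpa [Finset.sum_singleton, h2] using h
  set lam : ℕ → ℝ := fun i => max 0 (Real.logb 2 ((N:ℝ) * Q i)) with hlamdef
  have hlam0 : ∀ i, 0 ≤ lam i := fun i => le_max_left _ _
  -- lam i ≤ L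
  have hlamL : ∀ i ∈ Finset.Icc 1 N, lam i ≤ L := by
    intro i hi
    rcases le_or_gt (lam i) 4 with h | h
    · linarith
    · have hpos : 0 < Real.logb 2 ((N:ℝ) * Q i) := by
        by_contra hc
        push_neg at hc
        have : lam i = 0 := max_eq_left hc
        linarith
      have hleq : lam i = Real.logb 2 ((N:ℝ) * Q i) := max_eq_right hpos.le
      have hQi0 : 0 < (N:ℝ) * Q i := by
        rcases lt_or_ge 0 ((N:ℝ) * Q i) with h' | h'
        · exact h'
        · have hz : (N:ℝ) * Q i = 0 := le_antisymm h' (mul_nonneg hN0.le (hQ0 i hi))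
          rw [hz] at hpos
          simp [Real.logb] at hpos
      have h2l : (N:ℝ) * Q i = 2 ^ (lam i) := by
        rw [hleq]
        exact (Real.rpow_logb (by norm_num) (by norm_num) hQi0).symm
      have h1l : (1:ℝ) ≤ lam i := by linarith
      have hrp0 : (0:ℝ) < 2 ^ (lam i) := Real.rpow_pos_of_pos (by norm_num) _
      have hstep : (2:ℝ) ^ (lam i) ≤ (N:ℝ) * k := by
        have h1 : (2:ℝ) ^ (lam i) ≤ 2 ^ (lam i) * lam i := by
          nlinarith
        have h2 : (2:ℝ) ^ (lam i) * lam i = (N:ℝ) * (Q i * Real.logb 2 ((N:ℝ) * Q i)) := by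
          rw [← h2l, hleq]; ring
        have h3 : (N:ℝ) * (Q i * Real.logb 2 ((N:ℝ) * Q i)) ≤ (N:ℝ) * k :=
          mul_le_mul_of_nonneg_left (hsingle i hi) hN0.le
        linarith
      calc lam i = Real.logb 2 ((2:ℝ) ^ (lam i)) :=
            (Real.logb_rpow (by norm_num) (by norm_num)).symm
        _ ≤ L := Real.logb_le_logb_of_le h12 hrp0 hstep
  -- k ≤ L
  have hkL : k ≤ L := by
    rcases le_or_gt k 4 with h | h
    · linarith
    · have hlogN0 : (0:ℝ) ≤ Real.logb 2 (N:ℝ) :=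
        Real.logb_nonneg h12 (by exact_mod_cast hN.le)
      have hklogN : k ≤ Real.logb 2 (N:ℝ) := by
        rw [hk]
        apply Finset.sup'_le
        intro E hE
        rcases E.eq_empty_or_nonempty with hE0 | hEne
        · simp [hE0, hlogN0]
        · have hEsub : E ⊆ Finset.Icc 1 N := Finset.mem_powerset.1 hE
          have hQE0 : 0 ≤ ∑ i ∈ E, Q i :=
            Finset.sum_nonneg fun i hi => hQ0 i (hEsub hi)
          have hQE1 : ∑ i ∈ E, Q i ≤ 1 := by
            rw [← hQ1]
            exact Finset.sum_le_sum_of_subset_of_nonneg hEsub fun i hi _ => hQ0 i hi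
          have hcard1 : (1:ℝ) ≤ (E.card : ℝ) := by
            exact_mod_cast hEne.card_pos
          have hUE : ∑ i ∈ E, unif N i = (E.card : ℝ) / N := hUsum E
          have hUEpos : 0 < ∑ i ∈ E, unif N i := by
            rw [hUE]; positivity
          have hratio_le : (∑ i ∈ E, Q i) / (∑ i ∈ E, unif N i) ≤ (N:ℝ) := by
            rw [div_le_iff₀ hUEpos, hUE]
            calc (∑ i ∈ E, Q i) ≤ 1 := hQE1
              _ ≤ (E.card : ℝ) := hcard1
              _ = (N:ℝ) * ((E.card : ℝ) / N) := by field_simp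
          rcases le_or_gt (Real.logb 2 ((∑ i ∈ E, Q i) / (∑ i ∈ E, unif N i))) 0 with hlb | hlb
          · have := mul_nonpos_of_nonneg_of_nonpos hQE0 hlb
            linarith
          · have hratio0 : 0 < (∑ i ∈ E, Q i) / (∑ i ∈ E, unif N i) := by
              rcases lt_or_ge 0 ((∑ i ∈ E, Q i) / (∑ i ∈ E, unif N i)) with h' | h'
              · exact h'
              · have hz : (∑ i ∈ E, Q i) / (∑ i ∈ E, unif N i) = 0 :=
                  le_antisymm h' (div_nonneg hQE0 hUEpos.le)
                rw [hz] at hlb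
                simp [Real.logb] at hlb
            calc (∑ i ∈ E, Q i) * Real.logb 2 ((∑ i ∈ E, Q i) / (∑ i ∈ E, unif N i))
                ≤ 1 * Real.logb 2 ((∑ i ∈ E, Q i) / (∑ i ∈ E, unif N i)) :=
                  mul_le_mul_of_nonneg_right hQE1 hlb.le
              _ = Real.logb 2 ((∑ i ∈ E, Q i) / (∑ i ∈ E, unif N i)) := one_mul _
              _ ≤ Real.logb 2 (N:ℝ) := Real.logb_le_logb_of_le h12 hratio0 hratio_le
      have h1k : (1:ℝ) ≤ k := by linarith
      have h2k : (2:ℝ) ^ k ≤ (N:ℝ) * k := by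
        have h2N : (2:ℝ) ^ k ≤ (N:ℝ) :=
          (Real.le_logb_iff_rpow_le h12 hN0).1 hklogN
        nlinarith
      calc k = Real.logb 2 ((2:ℝ) ^ k) :=
            (Real.logb_rpow (by norm_num) (by norm_num)).symm
        _ ≤ L := Real.logb_le_logb_of_le h12 (Real.rpow_pos_of_pos (by norm_num) _) h2k
  -- threshold bound
  have hthr : ∀ t : ℝ, 0 < t →
      ∑ i ∈ (Finset.Icc 1 N).filter (fun i => t ≤ Real.logb 2 ((N:ℝ) * Q i)), Q i ≤ k / t := by
    intro t ht
    set E := (Finset.Icc 1 N).filter (fun i => t ≤ Real.logb 2 ((N:ℝ) * Q i)) with hEdef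
    have hEsub : E ⊆ Finset.Icc 1 N := Finset.filter_subset _ _
    have hQlow : ∀ i ∈ E, (2:ℝ) ^ t / N ≤ Q i := by
      intro i hi
      obtain ⟨hiI, hlog⟩ := Finset.mem_filter.1 hi
      have hQi0 : 0 < (N:ℝ) * Q i := by
        rcases lt_or_ge 0 ((N:ℝ) * Q i) with h' | h'
        · exact h'
        · have hz : (N:ℝ) * Q i = 0 := le_antisymm h' (mul_nonneg hN0.le (hQ0 i hiI))
          rw [hz] at hlog
          simp [Real.logb] at hlog
          linarith
      have h2t : (2:ℝ) ^ t ≤ (N:ℝ) * Q i := (Real.le_logb_iff_rpow_le h12 hQi0).1 hlog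
      rw [div_le_iff₀ hN0]
      linarith [mul_comm (Q i) (N:ℝ)]
    rcases E.eq_empty_or_nonempty with hE0 | hEne
    · rw [hE0]
      simp
      positivity
    · have hcard1 : (1:ℝ) ≤ (E.card : ℝ) := by exact_mod_cast hEne.card_pos
      have hQE0 : 0 ≤ ∑ i ∈ E, Q i := Finset.sum_nonneg fun i hi => hQ0 i (hEsub hi)
      have hUE : ∑ i ∈ E, unif N i = (E.card : ℝ) / N := hUsum E
      have hUEpos : 0 < ∑ i ∈ E, unif N i := by rw [hUE]; positivity
      have hQEge : (E.card : ℝ) * ((2:ℝ) ^ t / N) ≤ ∑ i ∈ E, Q i := by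
        calc (E.card : ℝ) * ((2:ℝ) ^ t / N) = ∑ _i ∈ E, (2:ℝ) ^ t / N := by
              rw [Finset.sum_const, nsmul_eq_mul]
          _ ≤ ∑ i ∈ E, Q i := Finset.sum_le_sum hQlow
      have hratio : (2:ℝ) ^ t ≤ (∑ i ∈ E, Q i) / (∑ i ∈ E, unif N i) := by
        rw [le_div_iff₀ hUEpos, hUE]
        calc (2:ℝ) ^ t * ((E.card : ℝ) / N) = (E.card : ℝ) * ((2:ℝ) ^ t / N) := by ring
          _ ≤ ∑ i ∈ E, Q i := hQEge
      have hratio0 : 0 < (∑ i ∈ E, Q i) / (∑ i ∈ E, unif N i) :=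
        lt_of_lt_of_le (Real.rpow_pos_of_pos (by norm_num) _) hratio
      have hlogb : t ≤ Real.logb 2 ((∑ i ∈ E, Q i) / (∑ i ∈ E, unif N i)) :=
        (Real.le_logb_iff_rpow_le h12 hratio0).2 hratio
      have hkey := hsup E (Finset.mem_powerset.2 hEsub)
      have : (∑ i ∈ E, Q i) * t ≤ k := by
        calc (∑ i ∈ E, Q i) * t
            ≤ (∑ i ∈ E, Q i) * Real.logb 2 ((∑ i ∈ E, Q i) / (∑ i ∈ E, unif N i)) :=
              mul_le_mul_of_nonneg_left hlogb hQE0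
          _ ≤ k := hkey
      rw [le_div_iff₀ ht]
      exact this
  -- relEnt ≤ ∑ Q i * lam i
  have hrelle : relEnt N Q (unif N) ≤ ∑ i ∈ Finset.Icc 1 N, Q i * lam i := by
    unfold relEnt
    apply Finset.sum_le_sum
    intro i hi
    have h2 : Q i / unif N i = (N:ℝ) * Q i := by
      simp [unif, div_inv_eq_mul, mul_comm]
    rw [h2]
    exact mul_le_mul_of_nonneg_left (le_max_right _ _) (hQ0 i hi)
  -- the layer-cake function
  set g : ℝ → ℝ := fun t => ∑ i ∈ Finset.Icc 1 N,
      Set.indicator (Set.Icc 0 (lam i)) (fun _ => Q i) t with hgdef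
  have hInt_i : ∀ i ∈ Finset.Icc 1 N,
      Integrable (Set.indicator (Set.Icc 0 (lam i)) (fun _ => Q i)) := by
    intro i _
    rw [integrable_indicator_iff measurableSet_Icc]
    exact integrableOn_const measure_Icc_lt_top.ne
  have hgInt : Integrable g := integrable_finset_sum _ hInt_i
  have hgII : ∀ a b : ℝ, IntervalIntegrable g volume a b := fun a b =>
    hgInt.intervalIntegrable
  -- layer cake identity
  have hlayer : ∑ i ∈ Finset.Icc 1 N, Q i * lam i = ∫ t in (0:ℝ)..L, g t := by
    rw [hgdef]
    rw [intervalIntegral.integral_finset_sum (fun i hi => (hInt_i i hi).intervalIntegrable)]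
    apply Finset.sum_congr rfl
    intro i hi
    have h1 : ∫ t in (0:ℝ)..L, Set.indicator (Set.Icc 0 (lam i)) (fun _ => Q i) t
        = ∫ t in (0:ℝ)..L, Set.indicator {x | x ≤ lam i} (fun _ => Q i) t := by
      apply intervalIntegral.integral_congr
      intro t ht
      rw [Set.uIcc_of_le hL0.le] at ht
      have ht0 : 0 ≤ t := ht.1
      simp only [Set.indicator_apply, Set.mem_Icc, Set.mem_setOf_eq]
      by_cases h : t ≤ lam i <;> simp [h, ht0]
    rw [h1, intervalIntegral.integral_indicator ⟨hlam0 i, hlamL i hi⟩,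
      intervalIntegral.integral_const]
    simp [smul_eq_mul, mul_comm]
  -- split the integral
  have hsplit : ∫ t in (0:ℝ)..L, g t = (∫ t in (0:ℝ)..k, g t) + ∫ t in k..L, g t :=
    (intervalIntegral.integral_add_adjacent_intervals (hgII 0 k) (hgII k L)).symm
  -- first piece
  have hg_le_one : ∀ t : ℝ, g t ≤ 1 := by
    intro t
    rw [hgdef]
    calc (∑ i ∈ Finset.Icc 1 N, Set.indicator (Set.Icc 0 (lam i)) (fun _ => Q i) t)
        ≤ ∑ i ∈ Finset.Icc 1 N, Q i := by
          apply Finset.sum_le_sum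
          intro i hi
          by_cases h : t ∈ Set.Icc 0 (lam i)
          · rw [Set.indicator_of_mem h]
          · rw [Set.indicator_of_notMem h]; exact hQ0 i hi
      _ = 1 := hQ1
  have hb1 : ∫ t in (0:ℝ)..k, g t ≤ k := by
    have : ∫ t in (0:ℝ)..k, g t ≤ ∫ _t in (0:ℝ)..k, (1:ℝ) := by
      apply intervalIntegral.integral_mono_on hk0.le (hgII 0 k) intervalIntegrable_const
      intro t _
      exact hg_le_one t
    simpa using this
  -- second piece
  have hInv : IntervalIntegrable (fun t : ℝ => k * t⁻¹) volume k L := by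
    apply IntervalIntegrable.const_mul
    apply intervalIntegral.intervalIntegrable_inv (f := fun x : ℝ => x) ?_ continuousOn_id
    intro x hx
    rw [Set.uIcc_of_le hkL] at hx
    exact ne_of_gt (lt_of_lt_of_le hk0 hx.1)
  have hb2 : ∫ t in k..L, g t ≤ ∫ t in k..L, k * t⁻¹ := by
    apply intervalIntegral.integral_mono_on hkL (hgII k L) hInv
    intro t ht
    have htk : k ≤ t := ht.1
    have ht0 : 0 < t := lt_of_lt_of_le hk0 htk
    have hgt : g t = ∑ i ∈ (Finset.Icc 1 N).filter
        (fun i => t ≤ Real.logb 2 ((N:ℝ) * Q i)), Q i := by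
      rw [hgdef, Finset.sum_filter]
      apply Finset.sum_congr rfl
      intro i _
      simp only [Set.indicator_apply, Set.mem_Icc]
      by_cases h : t ≤ Real.logb 2 ((N:ℝ) * Q i)
      · have : t ≤ lam i := le_trans h (le_max_right _ _)
        simp [h, ht0.le, this]
      · have : ¬ t ≤ lam i := by
          rw [hlamdef]
          simp only [le_max_iff, not_or]
          exact ⟨by linarith, h⟩
        simp [h, this]
    rw [hgt]
    have := hthr t ht0
    calc (∑ i ∈ (Finset.Icc 1 N).filter (fun i => t ≤ Real.logb 2 ((N:ℝ) * Q i)), Q i)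
        ≤ k / t := this
      _ = k * t⁻¹ := div_eq_mul_inv _ _
  have hb2' : ∫ t in k..L, k * t⁻¹ = k * (Real.log L - Real.log k) := by
    rw [intervalIntegral.integral_const_mul, integral_inv_of_pos hk0 hL0,
      Real.log_div (ne_of_gt hL0) (ne_of_gt hk0)]
  -- combine
  calc relEnt N Q (unif N) ≤ ∑ i ∈ Finset.Icc 1 N, Q i * lam i := hrelle
    _ = ∫ t in (0:ℝ)..L, g t := hlayer
    _ = (∫ t in (0:ℝ)..k, g t) + ∫ t in k..L, g t := hsplit
    _ ≤ k + k * (Real.log L - Real.log k) := by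
        have := hb2.trans_eq hb2'
        linarith
    _ = k * (Real.log L - Real.log k + 1) := by ring
end

section
/- Let N ≥ 2 be an integer and let ℰ = {(λ_j, Q_j) : j ∈ [M]} be any ensemble of probability distributions on [N] whose average Σ_{j=1}^M λ_j·Q_j equals the uniform distribution U_N. If K = D(ℰ) > 0, then the Holevo information satisfies χ(ℰ) ≤ K·(2·ln log₂ N − ln K + 1) + 16. -/
lemma harm_aux {a b : ℕ} (ha : 1 ≤ a) (hab : a ≤ b) :
    ∑ m ∈ Finset.Icc (a+1) b, ((m:ℝ))⁻¹ ≤ Real.log b - Real.log a := by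
  induction b with
  | zero => omega
  | succ b ih =>
    rcases Nat.lt_or_ge b a with h | h
    · have : a = b + 1 := by omega
      subst this
      simp
    · have hb0 : (0:ℝ) < b := by
        have : 0 < b := by omega
        exact_mod_cast this
      have key : ((b:ℝ)+1)⁻¹ ≤ Real.log ((b:ℝ)+1) - Real.log b := by
        have h1 : Real.log ((b:ℝ)/((b:ℝ)+1)) ≤ (b:ℝ)/((b:ℝ)+1) - 1 :=
          Real.log_le_sub_one_of_pos (by positivity)
        rw [Real.log_div (by positivity) (by positivity)] at h1
        have h2 : (b:ℝ)/((b:ℝ)+1) - 1 = -(((b:ℝ)+1)⁻¹) := by field_simp; ring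
        rw [h2] at h1
        linarith
      have hins : Finset.Icc (a+1) (b+1) = insert (b+1) (Finset.Icc (a+1) b) := by
        ext x
        simp only [Finset.mem_Icc, Finset.mem_insert]
        omega
      rw [hins, Finset.sum_insert (by simp)]
      have := ih h
      push_cast
      push_cast at this key
      linarith

lemma obsDiv_nonneg (N : ℕ) (P : ℕ → ℝ) (Q : ℕ → ℝ) : 0 ≤ obsDiv N P Q := by
  have h := Finset.le_sup' (s := (Finset.Icc 1 N).powerset)
    (fun E => (∑ i ∈ E, P i) * Real.logb 2 ((∑ i ∈ E, P i) / (∑ i ∈ E, Q i)))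
    (Finset.empty_mem_powerset (Finset.Icc 1 N))
  rw [obsDiv]
  refine le_trans (le_of_eq ?_) h
  simp

lemma perDist (N : ℕ) (hN : 2 ≤ N) (P : ℕ → ℝ) (hP : IsProbOn N P) :
    relEnt N P (unif N) ≤
      obsDiv N P (unif N) *
        (2 * Real.log (Real.logb 2 N) - Real.log (obsDiv N P (unif N)) + 1) + 16 := by
  obtain ⟨hPnn, hPsum⟩ := hP
  set D := obsDiv N P (unif N) with hDdef
  have hN2R : (2:ℝ) ≤ (N:ℝ) := by exact_mod_cast hN
  have hN0 : (0:ℝ) < N := by linarith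
  -- event bound
  have hEvent : ∀ E : Finset ℕ, E ⊆ Finset.Icc 1 N →
      (∑ i ∈ E, P i) * Real.logb 2 ((∑ i ∈ E, P i) / (∑ i ∈ E, unif N i)) ≤ D := by
    intro E hE
    rw [hDdef]
    unfold obsDiv
    exact Finset.le_sup'
      (fun E => (∑ i ∈ E, P i) * Real.logb 2 ((∑ i ∈ E, P i) / (∑ i ∈ E, unif N i)))
      (Finset.mem_powerset.2 hE)
  have hD0 : 0 ≤ D := obsDiv_nonneg N P (unif N)
  have hPle1 : ∀ i ∈ Finset.Icc 1 N, P i ≤ 1 := by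
    intro i hi
    rw [← hPsum]
    exact Finset.single_le_sum hPnn hi
  -- L
  set L : ℝ := Real.logb 2 N with hLdef
  have hL1 : (1:ℝ) ≤ L := by
    rw [hLdef, ← Real.logb_self_eq_one (b := 2) one_lt_two]
    exact Real.logb_le_logb_of_le one_lt_two two_pos hN2R
  have hL0 : (0:ℝ) ≤ L := by linarith
  -- Kx
  set Kx : ℕ := Nat.log 2 N with hKxdef
  have hKx1 : 1 ≤ Kx := Nat.log_pos one_lt_two hN
  have hKxL : (Kx:ℝ) ≤ L := by
    have h1 : (2:ℕ)^Kx ≤ N := Nat.pow_log_le_self 2 (by omega)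
    have h1R : (2:ℝ)^Kx ≤ (N:ℝ) := by exact_mod_cast h1
    have := Real.logb_le_logb_of_le one_lt_two (by positivity : (0:ℝ) < (2:ℝ)^Kx) h1R
    rwa [Real.logb_pow, Real.logb_self_eq_one one_lt_two, mul_one] at this
  have hNlt : (N:ℝ) < 2^(Kx+1) := by
    have := Nat.lt_pow_succ_log_self (b := 2) one_lt_two N
    exact_mod_cast this
  -- tail events
  set G : ℕ → Finset ℕ := fun m => (Finset.Icc 1 N).filter (fun i => (2:ℝ)^m ≤ P i * N)
    with hGdef
  have hGnn : ∀ m, 0 ≤ ∑ i ∈ G m, P i := by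
    intro m
    exact Finset.sum_nonneg fun i hi => hPnn i (Finset.mem_of_mem_filter i hi)
  have hGle1 : ∀ m, ∑ i ∈ G m, P i ≤ 1 := by
    intro m
    rw [← hPsum]
    exact Finset.sum_le_sum_of_subset_of_nonneg (Finset.filter_subset _ _)
      (fun i hi _ => hPnn i hi)
  have hGm : ∀ m : ℕ, 1 ≤ m → (∑ i ∈ G m, P i) * m ≤ D := by
    intro m hm
    by_cases hne : (G m).Nonempty
    · have hu : ∑ i ∈ G m, unif N i = ((G m).card : ℝ) * (N:ℝ)⁻¹ := by
        simp [unif, mul_comm]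
      have hucard : (0:ℝ) < ((G m).card : ℝ) := by exact_mod_cast hne.card_pos
      have hupos : 0 < ∑ i ∈ G m, unif N i := by rw [hu]; positivity
      have hsge : (2:ℝ)^m * (∑ i ∈ G m, unif N i) ≤ ∑ i ∈ G m, P i := by
        rw [hu]
        have : ∀ i ∈ G m, (2:ℝ)^m * (N:ℝ)⁻¹ ≤ P i := by
          intro i hi
          have h2 : (2:ℝ)^m ≤ P i * N := (Finset.mem_filter.1 hi).2
          rw [mul_inv_le_iff₀ hN0]
          linarith
        calc (2:ℝ)^m * (((G m).card : ℝ) * (N:ℝ)⁻¹)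
            = ∑ _i ∈ G m, (2:ℝ)^m * (N:ℝ)⁻¹ := by
              rw [Finset.sum_const, nsmul_eq_mul]; ring
          _ ≤ ∑ i ∈ G m, P i := Finset.sum_le_sum this
      have hrat : (2:ℝ)^m ≤ (∑ i ∈ G m, P i) / (∑ i ∈ G m, unif N i) :=
        (le_div_iff₀ hupos).2 hsge
      have hlog : (m:ℝ) ≤ Real.logb 2 ((∑ i ∈ G m, P i) / (∑ i ∈ G m, unif N i)) := by
        have := Real.logb_le_logb_of_le one_lt_two (by positivity : (0:ℝ) < (2:ℝ)^m) hrat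
        rwa [Real.logb_pow, Real.logb_self_eq_one one_lt_two, mul_one] at this
      calc (∑ i ∈ G m, P i) * m ≤ (∑ i ∈ G m, P i) *
            Real.logb 2 ((∑ i ∈ G m, P i) / (∑ i ∈ G m, unif N i)) :=
            mul_le_mul_of_nonneg_left hlog (hGnn m)
        _ ≤ D := hEvent _ (Finset.filter_subset _ _)
    · rw [Finset.not_nonempty_iff_eq_empty] at hne
      rw [hne]
      simpa using hD0
  have hGmD : ∀ m : ℕ, 1 ≤ m → ∑ i ∈ G m, P i ≤ D * ((m:ℝ))⁻¹ := by
    intro m hm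
    have hm0 : (0:ℝ) < (m:ℝ) := by exact_mod_cast hm
    have h := (le_div_iff₀ hm0).2 (hGm m hm)
    rwa [div_eq_mul_inv] at h
  -- relEnt rewrite
  have hrelEnt : relEnt N P (unif N) = ∑ i ∈ Finset.Icc 1 N, P i * Real.logb 2 (P i * N) := by
    unfold relEnt unif
    congr 1
    ext i
    rw [division_def, inv_inv]
  -- master inequality
  have master : ∀ k0 : ℕ, 1 ≤ k0 →
      relEnt N P (unif N) ≤ (k0:ℝ) + ∑ m ∈ Finset.Icc k0 Kx, ∑ i ∈ G m, P i := by
    intro k0 hk0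
    have key : ∀ i ∈ Finset.Icc 1 N, P i * Real.logb 2 (P i * N) ≤
        P i * k0 + ∑ m ∈ Finset.Icc k0 Kx, (if (2:ℝ)^m ≤ P i * N then P i else 0) := by
      intro i hi
      have hx0 : 0 ≤ P i := hPnn i hi
      have hsum_nn : 0 ≤ ∑ m ∈ Finset.Icc k0 Kx, (if (2:ℝ)^m ≤ P i * N then P i else 0) :=
        Finset.sum_nonneg fun m _ => by positivity
      rcases lt_or_ge (P i * N) ((2:ℝ)^k0) with hlt | hge
      · rcases eq_or_lt_of_le hx0 with h0 | hpos
        · rw [← h0]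
          simpa using hsum_nn
        · have hlog : Real.logb 2 (P i * N) ≤ (k0:ℝ) := by
            have := Real.logb_le_logb_of_le one_lt_two (by positivity : (0:ℝ) < P i * N) hlt.le
            rwa [Real.logb_pow, Real.logb_self_eq_one one_lt_two, mul_one] at this
          have : P i * Real.logb 2 (P i * N) ≤ P i * k0 :=
            mul_le_mul_of_nonneg_left hlog hx0
          linarith
      · have hxpos : 0 < P i := by
          by_contra h
          push_neg at h
          have : P i = 0 := le_antisymm h hx0
          rw [this, zero_mul] at hge
          have : (0:ℝ) < (2:ℝ)^k0 := by positivity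
          linarith
        have hxN0 : (0:ℝ) < P i * N := by positivity
        set n : ℕ := ⌊P i * N⌋₊ with hndef
        have hn2 : 2^k0 ≤ n := Nat.le_floor (by exact_mod_cast hge)
        have hn0 : n ≠ 0 := by
          have : (2:ℕ)^k0 > 0 := Nat.pow_pos (by norm_num)
          omega
        set j : ℕ := Nat.log 2 n with hjdef
        have hk0j : k0 ≤ j := (Nat.le_log_iff_pow_le one_lt_two hn0).2 hn2
        have hnN : n ≤ N := by
          have h1 : (n:ℝ) ≤ P i * N := Nat.floor_le (le_of_lt hxN0)
          have h2 : P i * N ≤ N := by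
            have := hPle1 i hi
            nlinarith
          exact_mod_cast h1.trans h2
        have hjKx : j ≤ Kx := Nat.log_mono_right hnN
        have hupp : P i * N < (2:ℝ)^(j+1) := by
          have h1 : P i * N < (n:ℝ) + 1 := Nat.lt_floor_add_one _
          have h2 : n + 1 ≤ 2^(j+1) := Nat.lt_pow_succ_log_self one_lt_two n
          have h2R : (n:ℝ) + 1 ≤ (2:ℝ)^(j+1) := by exact_mod_cast h2
          linarith
        have hlog : Real.logb 2 (P i * N) ≤ (j:ℝ) + 1 := by
          have := Real.logb_le_logb_of_le one_lt_two hxN0 hupp.le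
          rw [Real.logb_pow, Real.logb_self_eq_one one_lt_two, mul_one] at this
          push_cast at this
          linarith
        have hsub : Finset.Icc k0 j ⊆ Finset.Icc k0 Kx := Finset.Icc_subset_Icc_right hjKx
        have hall : ∀ m ∈ Finset.Icc k0 j, (if (2:ℝ)^m ≤ P i * N then P i else 0) = P i := by
          intro m hm
          have hmj : m ≤ j := (Finset.mem_Icc.1 hm).2
          have h1 : (2:ℕ)^m ≤ 2^j := Nat.pow_le_pow_right (by norm_num) hmj
          have h2 : (2:ℕ)^j ≤ n := Nat.pow_log_le_self 2 hn0
          have h3 : (n:ℝ) ≤ P i * N := Nat.floor_le (le_of_lt hxN0)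
          have h4 : (2:ℝ)^m ≤ P i * N := by
            have : ((2:ℕ)^m : ℝ) ≤ (n:ℝ) := by exact_mod_cast h1.trans h2
            push_cast at this
            linarith
          rw [if_pos h4]
        have hlb : P i * ((j:ℝ) + 1 - k0) ≤
            ∑ m ∈ Finset.Icc k0 Kx, (if (2:ℝ)^m ≤ P i * N then P i else 0) := by
          have h1 : ∑ m ∈ Finset.Icc k0 j, (if (2:ℝ)^m ≤ P i * N then P i else 0)
              = ((Finset.Icc k0 j).card : ℝ) * P i := by
            rw [Finset.sum_congr rfl hall, Finset.sum_const, nsmul_eq_mul]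
          have hcard : ((Finset.Icc k0 j).card : ℝ) = (j:ℝ) + 1 - k0 := by
            rw [Nat.card_Icc]
            have : k0 ≤ j + 1 := by omega
            push_cast [Nat.cast_sub this]
            ring
          have h2 := Finset.sum_le_sum_of_subset_of_nonneg hsub
            (fun m _ _ => (by positivity : (0:ℝ) ≤ if (2:ℝ)^m ≤ P i * N then P i else 0))
          rw [h1, hcard] at h2
          linarith [h2]
        have : P i * Real.logb 2 (P i * N) ≤ P i * ((j:ℝ) + 1) :=
          mul_le_mul_of_nonneg_left hlog hx0
        have hfin : P i * ((j:ℝ)+1) = P i * k0 + P i * ((j:ℝ) + 1 - k0) := by ring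
        linarith
    rw [hrelEnt]
    calc ∑ i ∈ Finset.Icc 1 N, P i * Real.logb 2 (P i * N)
        ≤ ∑ i ∈ Finset.Icc 1 N, (P i * k0 +
            ∑ m ∈ Finset.Icc k0 Kx, (if (2:ℝ)^m ≤ P i * N then P i else 0)) :=
          Finset.sum_le_sum key
      _ = (k0:ℝ) + ∑ m ∈ Finset.Icc k0 Kx, ∑ i ∈ G m, P i := by
          rw [Finset.sum_add_distrib, ← Finset.sum_mul, hPsum, one_mul, Finset.sum_comm]
          congr 1
          exact Finset.sum_congr rfl fun m _ => (Finset.sum_filter _ _).symm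
  -- D ≤ L
  have hDL : D ≤ L := by
    rw [hDdef]
    unfold obsDiv
    apply Finset.sup'_le
    intro E hE
    rw [Finset.mem_powerset] at hE
    have hs0 : 0 ≤ ∑ i ∈ E, P i := Finset.sum_nonneg fun i hi => hPnn i (hE hi)
    have hs1 : ∑ i ∈ E, P i ≤ 1 := by
      rw [← hPsum]
      exact Finset.sum_le_sum_of_subset_of_nonneg hE (fun i hi _ => hPnn i hi)
    rcases eq_or_lt_of_le hs0 with h0 | hs
    · rw [← h0, zero_mul]
      linarith
    · have hEne : E.Nonempty := Finset.nonempty_of_sum_ne_zero (f := P) (ne_of_gt hs)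
      have hu : ∑ i ∈ E, unif N i = (E.card : ℝ) * (N:ℝ)⁻¹ := by
        simp [unif, mul_comm]
      have hcard1 : (1:ℝ) ≤ (E.card : ℝ) := by exact_mod_cast hEne.card_pos
      have hupos : 0 < ∑ i ∈ E, unif N i := by rw [hu]; positivity
      have hle : (∑ i ∈ E, P i) / (∑ i ∈ E, unif N i) ≤ (N:ℝ) := by
        rw [div_le_iff₀ hupos, hu]
        have : (N:ℝ) * ((E.card : ℝ) * (N:ℝ)⁻¹) = (E.card : ℝ) := by
          field_simp
        rw [this]
        linarith
      have hlogb := Real.logb_le_logb_of_le one_lt_two (by positivity) hle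
      calc (∑ i ∈ E, P i) * Real.logb 2 ((∑ i ∈ E, P i) / (∑ i ∈ E, unif N i))
          ≤ (∑ i ∈ E, P i) * L := mul_le_mul_of_nonneg_left hlogb hs0
        _ ≤ 1 * L := mul_le_mul_of_nonneg_right hs1 hL0
        _ = L := one_mul L
  have hlogL0 : 0 ≤ Real.log L := Real.log_nonneg hL1
  have hlogKxL : Real.log (Kx:ℝ) ≤ Real.log L :=
    Real.log_le_log (by exact_mod_cast hKx1) hKxL
  rcases le_or_gt D 1 with hD1 | hD1
  · -- small D : k0 = 1
    have hmas := master 1 le_rfl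
    have hsum : ∑ m ∈ Finset.Icc 1 Kx, ∑ i ∈ G m, P i ≤ D * (1 + Real.log (Kx:ℝ)) := by
      calc ∑ m ∈ Finset.Icc 1 Kx, ∑ i ∈ G m, P i
          ≤ ∑ m ∈ Finset.Icc 1 Kx, D * ((m:ℝ))⁻¹ :=
            Finset.sum_le_sum fun m hm => hGmD m (Finset.mem_Icc.1 hm).1
        _ = D * ∑ m ∈ Finset.Icc 1 Kx, ((m:ℝ))⁻¹ := by rw [Finset.mul_sum]
        _ ≤ D * (1 + Real.log (Kx:ℝ)) := by
            apply mul_le_mul_of_nonneg_left _ hD0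
            have hins : Finset.Icc 1 Kx = insert 1 (Finset.Icc 2 Kx) := by
              ext x
              simp only [Finset.mem_Icc, Finset.mem_insert]
              omega
            have h2 := harm_aux (le_refl 1) hKx1
            norm_num at h2
            rw [hins, Finset.sum_insert (by simp)]
            norm_num
            linarith
    have hDlogD : D * Real.log D ≤ 0 :=
      mul_nonpos_of_nonneg_of_nonpos hD0 (Real.log_nonpos hD0 hD1)
    have hDlogL : 0 ≤ D * Real.log L := mul_nonneg hD0 hlogL0
    have hDlogKx : D * Real.log (Kx:ℝ) ≤ D * Real.log L :=
      mul_le_mul_of_nonneg_left hlogKxL hD0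
    rw [mul_add, mul_one] at hsum
    have hexp : D * (2 * Real.log L - Real.log D + 1) + 16
        = 2 * (D * Real.log L) - D * Real.log D + D + 16 := by ring
    rw [hexp]
    push_cast at hmas
    linarith
  · -- large D : k0 = ceil D
    have hDpos : 0 < D := by linarith
    set k0 : ℕ := ⌈D⌉₊ with hk0def
    have hk0ge1 : 1 ≤ k0 := Nat.one_le_ceil_iff.2 hDpos
    have hDk0 : D ≤ (k0:ℝ) := Nat.le_ceil D
    have hk0D : (k0:ℝ) < D + 1 := Nat.ceil_lt_add_one hD0
    have hlogDk0 : Real.log D ≤ Real.log (k0:ℝ) := Real.log_le_log hDpos hDk0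
    have hmas := master k0 hk0ge1
    rcases le_or_gt k0 Kx with hcase | hcase
    · have hins : Finset.Icc k0 Kx = insert k0 (Finset.Icc (k0+1) Kx) := by
        ext x
        simp only [Finset.mem_Icc, Finset.mem_insert]
        omega
      rw [hins, Finset.sum_insert (by simp)] at hmas
      have htail : ∑ m ∈ Finset.Icc (k0+1) Kx, ∑ i ∈ G m, P i
          ≤ D * (Real.log (Kx:ℝ) - Real.log (k0:ℝ)) := by
        calc ∑ m ∈ Finset.Icc (k0+1) Kx, ∑ i ∈ G m, P i
            ≤ ∑ m ∈ Finset.Icc (k0+1) Kx, D * ((m:ℝ))⁻¹ :=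
              Finset.sum_le_sum fun m hm => hGmD m (by
                have := (Finset.mem_Icc.1 hm).1
                omega)
          _ = D * ∑ m ∈ Finset.Icc (k0+1) Kx, ((m:ℝ))⁻¹ := by rw [Finset.mul_sum]
          _ ≤ D * (Real.log (Kx:ℝ) - Real.log (k0:ℝ)) :=
              mul_le_mul_of_nonneg_left (harm_aux hk0ge1 hcase) hD0
      have hg1 := hGle1 k0
      have hDlogKx : D * Real.log (Kx:ℝ) ≤ D * Real.log L :=
        mul_le_mul_of_nonneg_left hlogKxL hD0
      have hDlogk0 : D * Real.log D ≤ D * Real.log (k0:ℝ) :=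
        mul_le_mul_of_nonneg_left hlogDk0 hD0
      have hDlogL : 0 ≤ D * Real.log L := mul_nonneg hD0 hlogL0
      rw [mul_sub] at htail
      have hexp : D * (2 * Real.log L - Real.log D + 1) + 16
          = 2 * (D * Real.log L) - D * Real.log D + D + 16 := by ring
      rw [hexp]
      linarith
    · have hemp : Finset.Icc k0 Kx = ∅ := Finset.Icc_eq_empty_of_lt hcase
      rw [hemp, Finset.sum_empty, add_zero] at hmas
      have hlogDL : Real.log D ≤ Real.log L := Real.log_le_log hDpos hDL
      have hDlogDL : D * Real.log D ≤ D * Real.log L :=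
        mul_le_mul_of_nonneg_left hlogDL hD0
      have hDlogL : 0 ≤ D * Real.log L := mul_nonneg hD0 hlogL0
      have hexp : D * (2 * Real.log L - Real.log D + 1) + 16
          = 2 * (D * Real.log L) - D * Real.log D + D + 16 := by ring
      rw [hexp]
      linarith

/-- Theorem 5 (`thm-ub`): for any ensemble `ℰ = {(λ_j, Q_j) : j ∈ [M]}` of
distributions on `[N]`, `N ≥ 2`, whose average is uniform and whose divergence
information `K = D(ℰ)` is positive,
`χ(ℰ) ≤ K·(2·ln log₂ N − ln K + 1) + 16`. -/
theorem stmt14 (N M : ℕ) (hN : 2 ≤ N)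
    (lam : ℕ → ℝ) (hlam : IsProbOn M lam)
    (Q : ℕ → ℕ → ℝ) (hQ : ∀ j ∈ Finset.Icc 1 M, IsProbOn N (Q j))
    (havg : ∀ i ∈ Finset.Icc 1 N, ∑ j ∈ Finset.Icc 1 M, lam j * Q j i = unif N i)
    (K : ℝ) (hK : K = ∑ j ∈ Finset.Icc 1 M, lam j * obsDiv N (Q j) (unif N))
    (hKpos : 0 < K) :
    ∑ j ∈ Finset.Icc 1 M, lam j * relEnt N (Q j) (unif N)
      ≤ K * (2 * Real.log (Real.logb 2 N) - Real.log K + 1) + 16 := by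
  obtain ⟨hlamnn, hlamsum⟩ := hlam
  set L : ℝ := Real.logb 2 N with hLdef
  set Dj : ℕ → ℝ := fun j => obsDiv N (Q j) (unif N) with hDj
  have hDjnn : ∀ j, 0 ≤ Dj j := fun j => obsDiv_nonneg N (Q j) (unif N)
  have hper : ∀ j ∈ Finset.Icc 1 M, relEnt N (Q j) (unif N) ≤
      Dj j * (2 * Real.log L - Real.log (Dj j) + 1) + 16 :=
    fun j hj => perDist N hN (Q j) (hQ j hj)
  have h1 : ∑ j ∈ Finset.Icc 1 M, lam j * relEnt N (Q j) (unif N)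
      ≤ ∑ j ∈ Finset.Icc 1 M, lam j * (Dj j * (2 * Real.log L - Real.log (Dj j) + 1) + 16) :=
    Finset.sum_le_sum fun j hj => mul_le_mul_of_nonneg_left (hper j hj) (hlamnn j hj)
  have h2 : ∑ j ∈ Finset.Icc 1 M, lam j * (Dj j * (2 * Real.log L - Real.log (Dj j) + 1) + 16)
      = (2 * Real.log L + 1) * (∑ j ∈ Finset.Icc 1 M, lam j * Dj j)
        - (∑ j ∈ Finset.Icc 1 M, lam j * (Dj j * Real.log (Dj j)))
        + 16 * ∑ j ∈ Finset.Icc 1 M, lam j := by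
    rw [Finset.mul_sum, Finset.mul_sum, ← Finset.sum_sub_distrib, ← Finset.sum_add_distrib]
    exact Finset.sum_congr rfl fun j _ => by ring
  have hKD : K = ∑ j ∈ Finset.Icc 1 M, lam j * Dj j := hK
  have hjensen : K * Real.log K ≤ ∑ j ∈ Finset.Icc 1 M, lam j * (Dj j * Real.log (Dj j)) := by
    have h := Real.convexOn_mul_log.map_sum_le hlamnn hlamsum
      (fun j _ => Set.mem_Ici.2 (hDjnn j))
    simp only [smul_eq_mul] at h
    rw [hKD]
    exact h
  rw [hlamsum, mul_one] at h2
  have hfin : K * (2 * Real.log L - Real.log K + 1) + 16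
      = (2 * Real.log L + 1) * K - K * Real.log K + 16 := by ring
  rw [hfin]
  rw [h2] at h1
  rw [← hKD] at h1
  linarith
end

section
/- Let N be a positive integer and k a real number with N·k ≥ 16 and k ≤ log₂ N, and let y > 0 satisfy y·log₂(N·y) = k. Then k/log₂(Nk) ≤ y ≤ 2k/log₂(kN). -/
lemma logb2_le_self {x : ℝ} (hx : 0 < x) : Real.logb 2 x ≤ x := by
  have h2 : (0:ℝ) < Real.log 2 := Real.log_pos one_lt_two
  rw [Real.logb, div_le_iff₀ h2]
  have hxl : 0 < x * Real.log 2 := by positivity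
  have h1 : Real.log (x * Real.log 2) ≤ x * Real.log 2 - 1 :=
    Real.log_le_sub_one_of_pos hxl
  rw [Real.log_mul hx.ne' h2.ne'] at h1
  have he : (2.7 : ℝ) < Real.exp 1 := by linarith [Real.exp_one_gt_d9]
  have h3 : Real.exp (-1) ≤ Real.log 2 := by
    rw [Real.exp_neg]
    have hinv : (Real.exp 1)⁻¹ ≤ (2.7 : ℝ)⁻¹ := by
      apply inv_anti₀ (by norm_num) he.le
    have : (2.7:ℝ)⁻¹ < 0.6931471803 := by norm_num
    linarith [Real.log_two_gt_d9]
  have h4 : (-1 : ℝ) ≤ Real.log (Real.log 2) := by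
    calc (-1 : ℝ) = Real.log (Real.exp (-1)) := (Real.log_exp _).symm
    _ ≤ Real.log (Real.log 2) := Real.log_le_log (Real.exp_pos _) h3
  linarith

/-- Let `N` be a positive integer and `k` real with `N·k ≥ 16` and `k ≤ log₂ N`,
and let `y > 0` satisfy `y·log₂(N·y) = k`. Then `k/log₂(Nk) ≤ y ≤ 2k/log₂(kN)`. -/
theorem stmt15 (N : ℕ) (hN : 0 < N) (k : ℝ)
    (hNk : 16 ≤ (N : ℝ) * k) (hklog : k ≤ Real.logb 2 N)
    (y : ℝ) (hy : 0 < y) (hroot : y * Real.logb 2 ((N : ℝ) * y) = k) :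
    k / Real.logb 2 ((N : ℝ) * k) ≤ y ∧ y ≤ 2 * k / Real.logb 2 (k * N) := by
  have hNpos : (0:ℝ) < N := Nat.cast_pos.mpr hN
  have hk : 0 < k := by nlinarith
  have hNy : 0 < (N:ℝ) * y := by positivity
  have hlog16 : Real.logb 2 (16:ℝ) = 4 := by
    have : (16:ℝ) = 2 ^ (4:ℕ) := by norm_num
    rw [this, Real.logb_pow, Real.logb_self_eq_one one_lt_two]
    norm_num
  have h4 : (4:ℝ) ≤ Real.logb 2 ((N:ℝ) * k) := by
    rw [← hlog16]
    exact Real.logb_le_logb_of_le one_lt_two (by norm_num) hNk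
  have hLNy : 0 < Real.logb 2 ((N:ℝ) * y) := by nlinarith
  have hyk : y ≤ k := by
    by_contra hlt
    push_neg at hlt
    have h16 : (16:ℝ) ≤ (N:ℝ) * y := by nlinarith
    have : (4:ℝ) ≤ Real.logb 2 ((N:ℝ) * y) := by
      rw [← hlog16]; exact Real.logb_le_logb_of_le one_lt_two (by norm_num) h16
    nlinarith
  constructor
  · rw [div_le_iff₀ (by linarith)]
    have hmono : Real.logb 2 ((N:ℝ) * y) ≤ Real.logb 2 ((N:ℝ) * k) :=
      Real.logb_le_logb_of_le one_lt_two hNy (by nlinarith)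
    nlinarith
  · rw [mul_comm k (N:ℝ), le_div_iff₀ (by linarith)]
    have hNk_eq : (N:ℝ) * k = ((N:ℝ) * y) * Real.logb 2 ((N:ℝ) * y) := by
      rw [← hroot]; ring
    have hsplit : Real.logb 2 ((N:ℝ) * k)
        = Real.logb 2 ((N:ℝ) * y) + Real.logb 2 (Real.logb 2 ((N:ℝ) * y)) := by
      rw [hNk_eq, Real.logb_mul hNy.ne' hLNy.ne']
    have hle : Real.logb 2 (Real.logb 2 ((N:ℝ) * y)) ≤ Real.logb 2 ((N:ℝ) * y) :=
      logb2_le_self hLNy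
    nlinarith [hroot]
end

section
/- Fix an integer N > 1 and a real k > 0, and let v_i, s_i, p_i be as in the construction, with n the smallest index in [N] such that v_n > 1 (which exists). Then for every i with 1 ≤ i ≤ n − 1, 2^(k/s_i)/(1 + (k/s_i)·ln 2) ≤ N·p_i ≤ 2^(k/s_i). -/
private lemma core_ineq (m a b A B : ℝ) (hm : 2 ≤ m) (ha : 0 < a) (hab : a ≤ b)
    (hA : A = Real.exp a) (hB : B = Real.exp b)
    (hEq : m * A * a = (m - 1) * B * b) :
    A / (1 + a) ≤ m * A - (m - 1) * B ∧ m * A - (m - 1) * B ≤ A := by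
  have hA0 : 0 < A := hA ▸ Real.exp_pos a
  have hB0 : 0 < B := hB ▸ Real.exp_pos b
  have hb : 0 < b := lt_of_lt_of_le ha hab
  have hAB : A ≤ B := by rw [hA, hB]; exact Real.exp_le_exp.mpr hab
  constructor
  · -- lower bound
    have hkey : (1 + a - b) * B ≤ A := by
      have h1 := Real.add_one_le_exp (a - b)
      have h2 : Real.exp (a - b) * Real.exp b = Real.exp a := by
        rw [← Real.exp_add]; ring_nf
      have h3 : (a - b + 1) * Real.exp b ≤ Real.exp (a - b) * Real.exp b :=
        mul_le_mul_of_nonneg_right h1 (Real.exp_pos b).le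
      rw [hA, hB]; nlinarith [h2, h3]
    have hD : m * (B * b - A * a) = B * b := by linear_combination -hEq
    have hDpos : 0 < B * b - A * a := by
      nlinarith [mul_pos hB0 hb, mul_pos hA0 ha]
    have h4 : B * b - A * a ≤ B * (b - a) * (1 + a) := by
      nlinarith [mul_le_mul_of_nonneg_left hkey ha.le]
    have hD2 : (m * (b - a) * (1 + a)) * (B * b - A * a) = (b - a) * (1 + a) * (B * b) := by
      linear_combination ((b - a) * (1 + a)) * hD
    have h5' : b * (B * b - A * a) ≤ (m * (b - a) * (1 + a)) * (B * b - A * a) := by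
      nlinarith [mul_le_mul_of_nonneg_left h4 hb.le, hD2]
    have h5 : b ≤ m * (b - a) * (1 + a) := le_of_mul_le_mul_right h5' hDpos
    rw [div_le_iff₀ (by linarith : (0:ℝ) < 1 + a)]
    have h6 : A * b ≤ (m * (b - a) * (1 + a)) * A := by
      nlinarith [mul_le_mul_of_nonneg_right h5 hA0.le]
    have h7 : ((m * A - (m - 1) * B) * (1 + a)) * b = (m * (b - a) * (1 + a)) * A := by
      linear_combination (1 + a) * hEq
    exact le_of_mul_le_mul_right (by linarith [h6, h7]) hb
  · nlinarith [mul_le_mul_of_nonneg_left hAB (by linarith : (0:ℝ) ≤ m - 1)]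

/-- In the construction, the smallest index `n ∈ [N]` with `v_n > 1` exists, and for
all `1 ≤ i ≤ n − 1` one has `2^(k/s_i)/(1 + (k/s_i)·ln 2) ≤ N·p_i ≤ 2^(k/s_i)`. -/
theorem stmt17 (N : ℕ) (hN : 1 < N) (k : ℝ) (hk : 0 < k)
    (v : ℕ → ℝ)
    (hv : ∀ i ∈ Finset.Icc 1 N,
      0 < v i ∧ v i * Real.logb 2 ((N : ℝ) * v i / (i : ℝ)) = k)
    (s : ℕ → ℝ) (hs0 : s 0 = 0) (hs : ∀ i ∈ Finset.Icc 1 N, s i = min 1 (v i))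
    (p : ℕ → ℝ) (hp : ∀ i ∈ Finset.Icc 1 N, p i = s i - s (i - 1)) :
    ∃ n ∈ Finset.Icc 1 N, 1 < v n ∧ (∀ i ∈ Finset.Icc 1 N, i < n → v i ≤ 1) ∧
      ∀ i, 1 ≤ i → i ≤ n - 1 →
        (2 : ℝ) ^ (k / s i) / (1 + (k / s i) * Real.log 2) ≤ (N : ℝ) * p i ∧
        (N : ℝ) * p i ≤ (2 : ℝ) ^ (k / s i) := by
  classical
  have hN0 : (0:ℝ) < N := by exact_mod_cast Nat.lt_of_lt_of_le Nat.zero_lt_one hN.le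
  have hlog2 : 0 < Real.log 2 := Real.log_pos (by norm_num)
  have vpos : ∀ i ∈ Finset.Icc 1 N, 0 < v i := fun i hi => (hv i hi).1
  have key2 : ∀ i ∈ Finset.Icc 1 N,
      (N:ℝ) * v i = (i:ℝ) * Real.exp (k / v i * Real.log 2) := by
    intro i hi
    obtain ⟨hi1, hiN⟩ := Finset.mem_Icc.mp hi
    obtain ⟨hvpos, hveq⟩ := hv i hi
    have hipos : (0:ℝ) < (i:ℝ) := by exact_mod_cast hi1
    have harg : 0 < (N:ℝ) * v i / i := div_pos (mul_pos hN0 hvpos) hipos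
    have hlb : Real.logb 2 ((N:ℝ) * v i / (i:ℝ)) = k / v i := by
      rw [eq_div_iff hvpos.ne']
      linear_combination hveq
    have hrw := Real.rpow_logb (by norm_num : (0:ℝ) < 2) (by norm_num) harg
    rw [hlb] at hrw
    have hpow : (2:ℝ) ^ (k / v i) = Real.exp (k / v i * Real.log 2) := by
      rw [Real.rpow_def_of_pos (by norm_num : (0:ℝ) < 2), mul_comm]
    rw [hpow] at hrw
    rw [hrw]
    field_simp
  have mono : ∀ i j, i ∈ Finset.Icc 1 N → j ∈ Finset.Icc 1 N → i ≤ j → v i ≤ v j := by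
    intro i j hi hj hij
    by_contra hc
    push_neg at hc
    have hvi := vpos i hi
    have hvj := vpos j hj
    have hdiv : k / v i < k / v j := div_lt_div_of_pos_left hk hvj hc
    have hexp : Real.exp (k / v i * Real.log 2) < Real.exp (k / v j * Real.log 2) :=
      Real.exp_lt_exp.mpr (by nlinarith)
    have h1 := key2 i hi
    have h2 := key2 j hj
    have hijR : (i:ℝ) ≤ (j:ℝ) := by exact_mod_cast hij
    have hjpos : (0:ℝ) < (j:ℝ) := by
      exact_mod_cast Nat.lt_of_lt_of_le Nat.zero_lt_one (Finset.mem_Icc.mp hj).1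
    nlinarith [mul_le_mul_of_nonneg_right hijR (Real.exp_pos (k / v i * Real.log 2)).le,
      mul_lt_mul_of_pos_left hexp hjpos]
  have hNmem : N ∈ Finset.Icc 1 N := Finset.mem_Icc.mpr ⟨by omega, le_rfl⟩
  have hvN : 1 < v N := by
    have h := key2 N hNmem
    have hvNpos := vpos N hNmem
    have hx : 0 < k / v N * Real.log 2 := by positivity
    have hveq : v N = Real.exp (k / v N * Real.log 2) := mul_left_cancel₀ (ne_of_gt hN0) h
    have h2 := Real.exp_lt_exp.mpr hx
    rw [Real.exp_zero] at h2
    linarith [hveq ▸ h2]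
  set S := (Finset.Icc 1 N).filter (fun m => 1 < v m) with hS
  have hSne : S.Nonempty := ⟨N, Finset.mem_filter.mpr ⟨hNmem, hvN⟩⟩
  set n := S.min' hSne with hn
  have hnS : n ∈ S := S.min'_mem hSne
  have hnIcc : n ∈ Finset.Icc 1 N := (Finset.mem_filter.mp hnS).1
  have hvn : 1 < v n := (Finset.mem_filter.mp hnS).2
  have hmin : ∀ i ∈ Finset.Icc 1 N, i < n → v i ≤ 1 := by
    intro i hi hilt
    by_contra hgt
    push_neg at hgt
    have := S.min'_le i (Finset.mem_filter.mpr ⟨hi, hgt⟩)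
    omega
  refine ⟨n, hnIcc, hvn, hmin, ?_⟩
  intro i h1 h2
  have hn1 : 1 ≤ n := (Finset.mem_Icc.mp hnIcc).1
  have hnN : n ≤ N := (Finset.mem_Icc.mp hnIcc).2
  have hin : i < n := by omega
  have hiN : i ≤ N := by omega
  have hiIcc : i ∈ Finset.Icc 1 N := Finset.mem_Icc.mpr ⟨h1, hiN⟩
  have hvi1 : v i ≤ 1 := hmin i hiIcc hin
  have hvi := vpos i hiIcc
  have hsi : s i = v i := by rw [hs i hiIcc, min_eq_right hvi1]
  have hxpos : 0 < k / v i * Real.log 2 := by positivity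
  have hgoalrw : (2:ℝ) ^ (k / s i) = Real.exp (k / v i * Real.log 2) := by
    rw [hsi, Real.rpow_def_of_pos (by norm_num : (0:ℝ) < 2), mul_comm]
  rw [hgoalrw, hsi]
  rcases eq_or_lt_of_le h1 with h1' | h2'
  · -- i = 1
    have hi1 : i = 1 := h1'.symm
    subst hi1
    have hp1 : p 1 = v 1 := by
      rw [hp 1 hiIcc]
      norm_num [hs0, hsi]
    have hk1 := key2 1 hiIcc
    have hE : (N:ℝ) * p 1 = Real.exp (k / v 1 * Real.log 2) := by
      rw [hp1]; rw [hk1]; ring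
    constructor
    · rw [hE]
      apply div_le_self (Real.exp_pos _).le
      linarith
    · rw [hE]
  · -- 2 ≤ i
    have hi2 : 2 ≤ i := h2'
    have hprev : i - 1 ∈ Finset.Icc 1 N := Finset.mem_Icc.mpr ⟨by omega, by omega⟩
    have hprevlt : i - 1 < n := by omega
    have hvprev := vpos (i-1) hprev
    have hvprev1 : v (i-1) ≤ 1 := hmin _ hprev hprevlt
    have hsprev : s (i-1) = v (i-1) := by rw [hs _ hprev, min_eq_right hvprev1]
    have hmono : v (i-1) ≤ v i := mono _ _ hprev hiIcc (by omega)
    have hk1 := key2 i hiIcc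
    have hk2 := key2 (i-1) hprev
    have hcast : ((i-1 : ℕ) : ℝ) = (i:ℝ) - 1 := by
      rw [Nat.cast_sub h1]; norm_num
    rw [hcast] at hk2
    have hppi : p i = v i - v (i-1) := by rw [hp i hiIcc, hsi, hsprev]
    have hdiv : k / v i ≤ k / v (i-1) := by gcongr
    have hab : k / v i * Real.log 2 ≤ k / v (i-1) * Real.log 2 := by nlinarith
    have hva : v i * (k / v i * Real.log 2) = k * Real.log 2 := by field_simp
    have hvb : v (i-1) * (k / v (i-1) * Real.log 2) = k * Real.log 2 := by field_simp
    have e1 : (i:ℝ) * Real.exp (k / v i * Real.log 2) * (k / v i * Real.log 2)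
        = (N:ℝ) * (k * Real.log 2) := by
      linear_combination (N:ℝ) * hva - (k / v i * Real.log 2) * hk1
    have e2 : ((i:ℝ) - 1) * Real.exp (k / v (i-1) * Real.log 2) * (k / v (i-1) * Real.log 2)
        = (N:ℝ) * (k * Real.log 2) := by
      linear_combination (N:ℝ) * hvb - (k / v (i-1) * Real.log 2) * hk2
    have hEq : (i:ℝ) * Real.exp (k / v i * Real.log 2) * (k / v i * Real.log 2)
        = ((i:ℝ) - 1) * Real.exp (k / v (i-1) * Real.log 2) * (k / v (i-1) * Real.log 2) := by
      rw [e1, e2]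
    have hmR : (2:ℝ) ≤ (i:ℝ) := by exact_mod_cast hi2
    obtain ⟨lo, hi'⟩ := core_ineq (i:ℝ) (k / v i * Real.log 2) (k / v (i-1) * Real.log 2)
      (Real.exp (k / v i * Real.log 2)) (Real.exp (k / v (i-1) * Real.log 2))
      hmR hxpos hab rfl rfl hEq
    have hNp : (N:ℝ) * p i = (i:ℝ) * Real.exp (k / v i * Real.log 2)
        - ((i:ℝ) - 1) * Real.exp (k / v (i-1) * Real.log 2) := by
      rw [hppi, mul_sub, hk1, hk2]
    exact ⟨by rw [hNp]; exact lo, by rw [hNp]; exact hi'⟩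
end

section
/- Let N be a positive integer and Q a probability distribution on [N] with observational divergence D(Q‖U_N) < 16/N. Then the relative entropy satisfies S(Q‖U_N) < 16. -/
/-- If `D(Q‖U_N) < 16/N` for a distribution `Q` on `[N]`, then `S(Q‖U_N) < 16`. -/
theorem stmt18 (N : ℕ) (hN : 0 < N) (Q : ℕ → ℝ) (hQ : IsProbOn N Q)
    (hdiv : obsDiv N Q (unif N) < 16 / (N : ℝ)) :
    relEnt N Q (unif N) < 16 := by
  have hNe : (Finset.Icc 1 N).Nonempty := by
    exact ⟨1, Finset.mem_Icc.mpr ⟨le_refl 1, hN⟩⟩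
  have hterm : ∀ i ∈ Finset.Icc 1 N,
      Q i * Real.logb 2 (Q i / unif N i) < 16 / (N : ℝ) := by
    intro i hi
    have hmem : ({i} : Finset ℕ) ∈ (Finset.Icc 1 N).powerset := by
      simpa [Finset.singleton_subset_iff] using hi
    have hle := Finset.le_sup' (fun E => (∑ j ∈ E, Q j) *
        Real.logb 2 ((∑ j ∈ E, Q j) / (∑ j ∈ E, unif N j))) hmem
    simp only [Finset.sum_singleton] at hle
    exact lt_of_le_of_lt hle hdiv
  have := Finset.sum_lt_sum_of_nonempty hNe hterm
  calc relEnt N Q (unif N) < ∑ _i ∈ Finset.Icc 1 N, 16 / (N : ℝ) := this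
    _ = 16 := by
        rw [Finset.sum_const, Nat.card_Icc]
        rw [Nat.add_sub_cancel, nsmul_eq_mul]
        have hN' : (N : ℝ) ≠ 0 := Nat.cast_ne_zero.mpr hN.ne'
        field_simp
end
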